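/- arXiv:2112.00866 — 5 statements merged into one kernel-verified Lean document; each statement's English description precedes it below -/
import Mathlib

section
/- Assume p_T(x₀, u) > 0 for ν-almost every u and that ∫_G f(u) p_{T−t}(x,u)/p_T(x₀,u) dν(u) < ∞ for every t ∈ (0,T) and x ∈ G. Define h(t,x) := (∫_G f(u) · p_{T−t}(x,u)/p_T(x₀,u) dν(u)) / (∫_G f dν) for t ∈ (0,T), and h(0,x) := (∫_G f(u) · p_T(x,u)/p_T(x₀,u) dν(u)) / (∫_G f dν). Then for every t ∈ [0,T) the random variable h(t, X_t) is integrable with E[h(t, X_t)] = 1, the process (h(t, X_t))_{t ∈ [0,T)} is a martingale with respect to (F_t) under ℙ, and h(0, X_0) = 1 almost surely. -/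
open MeasureTheory
open scoped ENNReal

/-- Let `ν` be a σ-finite measure on `G` and `f ≥ 0` with `0 < ∫ f dν < ∞`.  Assume
`p_T(x₀, u) > 0` for ν-a.e. `u` and `∫ f(u) p_{T-t}(x,u)/p_T(x₀,u) dν(u) < ∞` for all
`t ∈ (0,T)`, `x ∈ G`.  With `h(t,x) = (∫ f(u) p_{T-t}(x,u)/p_T(x₀,u) dν(u)) / ∫ f dν`,
the process `(h(t, X_t))_{t ∈ [0,T)}` is integrable with mean `1`, is a martingale with
respect to `(ℱ_t)` under `ℙ`, and `h(0, X_0) = 1` almost surely. -/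
theorem mixture_h_transform_martingale
    {G : Type*} [MeasurableSpace G] (Vol : Measure G) [SigmaFinite Vol]
    {Ω : Type*} {mΩ : MeasurableSpace Ω} (P : Measure Ω) [IsProbabilityMeasure P]
    (ℱ : Filtration ℝ mΩ)
    (p : ℝ → G → G → ℝ)
    (hp_meas : Measurable fun q : ℝ × G × G => p q.1 q.2.1 q.2.2)
    (hp_nonneg : ∀ t x y, 0 < t → 0 ≤ p t x y)
    (hp_symm : ∀ t x y, 0 < t → p t x y = p t y x)
    (hp_ck : ∀ s t : ℝ, 0 < s → 0 < t → ∀ x y,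
      p (t + s) x y = ∫ z, p t x z * p s z y ∂Vol)
    (hp_norm : ∀ t x, 0 < t → ∫ y, p t x y ∂Vol = 1)
    (X : ℝ → Ω → G)
    (hX_adapted : ∀ t : ℝ, 0 ≤ t → Measurable[ℱ t] (X t))
    (x₀ : G) (hX0 : ∀ᵐ ω ∂P, X 0 ω = x₀)
    (hMarkov : ∀ s t : ℝ, 0 ≤ s → s < t → ∀ f : G → ℝ, Measurable f →
      (∃ C, ∀ y, |f y| ≤ C) →
      P[(fun ω => f (X t ω)) | ℱ s] =ᵐ[P] fun ω => ∫ z, f z * p (t - s) (X s ω) z ∂Vol)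
    (T : ℝ) (hT : 0 < T)
    (ν : Measure G) [SigmaFinite ν]
    (f : G → ℝ) (hf_meas : Measurable f) (hf_nonneg : ∀ u, 0 ≤ f u)
    (hf_int : Integrable f ν) (hf_pos : 0 < ∫ u, f u ∂ν)
    (hpT_pos : ∀ᵐ u ∂ν, 0 < p T x₀ u)
    (h_fin : ∀ t : ℝ, 0 < t → t < T → ∀ x : G,
      Integrable (fun u => f u * (p (T - t) x u / p T x₀ u)) ν) :
    -- for every `t ∈ [0, T)`, `h(t, X_t)` is integrable with expectation `1` :
    (∀ t : ℝ, 0 ≤ t → t < T →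
      Integrable (fun ω =>
        (∫ u, f u * (p (T - t) (X t ω) u / p T x₀ u) ∂ν) / (∫ u, f u ∂ν)) P ∧
      ∫ ω, (∫ u, f u * (p (T - t) (X t ω) u / p T x₀ u) ∂ν) / (∫ u, f u ∂ν) ∂P = 1) ∧
    -- the process `(h(t, X_t))_{t ∈ [0,T)}` is a martingale with respect to `(ℱ_t)` :
    (∀ s t : ℝ, 0 ≤ s → s ≤ t → t < T →
      P[(fun ω =>
          (∫ u, f u * (p (T - t) (X t ω) u / p T x₀ u) ∂ν) / (∫ u, f u ∂ν)) | ℱ s]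
        =ᵐ[P] fun ω =>
          (∫ u, f u * (p (T - s) (X s ω) u / p T x₀ u) ∂ν) / (∫ u, f u ∂ν)) ∧
    -- and `h(0, X_0) = 1` almost surely :
    (∀ᵐ ω ∂P,
      (∫ u, f u * (p (T - 0) (X 0 ω) u / p T x₀ u) ∂ν) / (∫ u, f u ∂ν) = 1) := by
  classical
  have hcne : (∫ u, f u ∂ν) ≠ 0 := ne_of_gt hf_pos
  -- measurability of kernel slices
  have hpm2 : ∀ r : ℝ, Measurable fun q : G × G => p r q.1 q.2 := fun r =>
    hp_meas.comp (measurable_const.prodMk measurable_id)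
  have hpm1 : ∀ r x, Measurable (p r x) := fun r x =>
    (hpm2 r).comp (measurable_const.prodMk measurable_id)
  have hpmL : ∀ r u, Measurable fun z => p r z u := fun r u =>
    (hpm2 r).comp (measurable_id.prodMk measurable_const)
  have hXm : ∀ t : ℝ, 0 ≤ t → Measurable (X t) := fun t ht =>
    (hX_adapted t ht).mono (ℱ.le t) le_rfl
  -- the kernels are integrable
  have hker : ∀ r : ℝ, 0 < r → ∀ x, Integrable (fun z => p r x z) Vol := by
    intro r hr x
    by_contra h
    have h1 := hp_norm r x hr
    rw [integral_undef h] at h1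
    norm_num at h1
  -- measurability of the real h-transform integral
  have hφmeas : ∀ r : ℝ, Measurable fun x => ∫ u, f u * (p r x u / p T x₀ u) ∂ν := by
    intro r
    have hm : Measurable fun q : G × G => f q.2 * (p r q.1 q.2 / p T x₀ q.2) :=
      (hf_meas.comp measurable_snd).mul ((hpm2 r).div ((hpm1 T x₀).comp measurable_snd))
    exact hm.stronglyMeasurable.integral_prod_right'.measurable
  have hFmeas : Measurable fun u => ENNReal.ofReal (f u / p T x₀ u) :=
    (hf_meas.div (hpm1 T x₀)).ennreal_ofReal
  have hΨmeas : ∀ r : ℝ, Measurable fun x =>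
      ∫⁻ u, ENNReal.ofReal (f u / p T x₀ u) * ENNReal.ofReal (p r x u) ∂ν := by
    intro r
    have hm : Measurable fun q : G × G =>
        ENNReal.ofReal (f q.2 / p T x₀ q.2) * ENNReal.ofReal (p r q.1 q.2) :=
      (hFmeas.comp measurable_snd).mul (hpm2 r).ennreal_ofReal
    exact hm.lintegral_prod_right'
  -- Ψ = ofReal φ
  have hΨφ : ∀ t : ℝ, 0 < t → t < T → ∀ x : G,
      ∫⁻ u, ENNReal.ofReal (f u / p T x₀ u) * ENNReal.ofReal (p (T - t) x u) ∂ν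
        = ENNReal.ofReal (∫ u, f u * (p (T - t) x u / p T x₀ u) ∂ν) := by
    intro t ht htT x
    have hb : 0 < T - t := by linarith
    have hint : Integrable (fun u => f u / p T x₀ u * p (T - t) x u) ν :=
      (h_fin t ht htT x).congr (Filter.Eventually.of_forall fun u => by ring)
    have h1 : ∫ u, f u * (p (T - t) x u / p T x₀ u) ∂ν
        = ∫ u, f u / p T x₀ u * p (T - t) x u ∂ν :=
      integral_congr_ae (Filter.Eventually.of_forall fun u => by ring)
    rw [h1, ofReal_integral_eq_lintegral_ofReal hint
      (Filter.Eventually.of_forall fun u =>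
        mul_nonneg (div_nonneg (hf_nonneg u) (hp_nonneg T x₀ u hT)) (hp_nonneg _ x u hb))]
    exact lintegral_congr fun u =>
      (ENNReal.ofReal_mul (div_nonneg (hf_nonneg u) (hp_nonneg T x₀ u hT))).symm
  -- a.e. Chapman-Kolmogorov in lintegral form, at x₀ with total time T
  have hCK0 : ∀ a b : ℝ, 0 < a → 0 < b → a + b = T → (∀ᵐ u ∂ν,
      ∫⁻ z, ENNReal.ofReal (p a x₀ z) * ENNReal.ofReal (p b z u) ∂Vol
        = ENNReal.ofReal (p T x₀ u)) := by
    intro a b ha hb hab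
    filter_upwards [hpT_pos] with u hu
    have hck := hp_ck b a hb ha x₀ u
    rw [hab] at hck
    have hint : Integrable (fun z => p a x₀ z * p b z u) Vol := by
      by_contra h
      rw [integral_undef h] at hck
      exact absurd hck (ne_of_gt hu)
    calc ∫⁻ z, ENNReal.ofReal (p a x₀ z) * ENNReal.ofReal (p b z u) ∂Vol
        = ∫⁻ z, ENNReal.ofReal (p a x₀ z * p b z u) ∂Vol :=
          lintegral_congr fun z => (ENNReal.ofReal_mul (hp_nonneg a x₀ z ha)).symm
      _ = ENNReal.ofReal (∫ z, p a x₀ z * p b z u ∂Vol) :=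
          (ofReal_integral_eq_lintegral_ofReal hint (Filter.Eventually.of_forall fun z =>
            mul_nonneg (hp_nonneg a x₀ z ha) (hp_nonneg b z u hb))).symm
      _ = ENNReal.ofReal (p T x₀ u) := by rw [← hck]
  -- one-sided Chapman-Kolmogorov in lintegral form, everywhere
  have hCKge : ∀ a b : ℝ, 0 < a → 0 < b → ∀ x u : G,
      ENNReal.ofReal (p (a + b) x u)
        ≤ ∫⁻ z, ENNReal.ofReal (p a x z) * ENNReal.ofReal (p b z u) ∂Vol := by
    intro a b ha hb x u
    have hck := hp_ck b a hb ha x u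
    by_cases hint : Integrable (fun z => p a x z * p b z u) Vol
    · rw [hck, ofReal_integral_eq_lintegral_ofReal hint (Filter.Eventually.of_forall fun z =>
        mul_nonneg (hp_nonneg a x z ha) (hp_nonneg b z u hb))]
      exact le_of_eq (lintegral_congr fun z => ENNReal.ofReal_mul (hp_nonneg a x z ha))
    · rw [hck, integral_undef hint]
      simp
  -- Tonelli
  have hTon : ∀ b r : ℝ, ∀ x : G,
      ∫⁻ z, (∫⁻ u, ENNReal.ofReal (f u / p T x₀ u) * ENNReal.ofReal (p b z u) ∂ν)
          * ENNReal.ofReal (p r x z) ∂Vol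
        = ∫⁻ u, ENNReal.ofReal (f u / p T x₀ u)
            * (∫⁻ z, ENNReal.ofReal (p r x z) * ENNReal.ofReal (p b z u) ∂Vol) ∂ν := by
    intro b r x
    have hswapm : Measurable (Function.uncurry fun z u =>
        ENNReal.ofReal (f u / p T x₀ u) * ENNReal.ofReal (p b z u)
          * ENNReal.ofReal (p r x z)) := by
      refine Measurable.fun_mul (Measurable.fun_mul ?_ ?_) ?_
      · exact hFmeas.comp measurable_snd
      · exact (hpm2 b).ennreal_ofReal
      · exact ((hpm1 r x).comp measurable_fst).ennreal_ofReal
    calc ∫⁻ z, (∫⁻ u, ENNReal.ofReal (f u / p T x₀ u) * ENNReal.ofReal (p b z u) ∂ν)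
            * ENNReal.ofReal (p r x z) ∂Vol
        = ∫⁻ z, ∫⁻ u, ENNReal.ofReal (f u / p T x₀ u) * ENNReal.ofReal (p b z u)
            * ENNReal.ofReal (p r x z) ∂ν ∂Vol := by
          refine lintegral_congr fun z => ?_
          exact (lintegral_mul_const _ (hFmeas.mul ((hpm1 b z).ennreal_ofReal))).symm
      _ = ∫⁻ u, ∫⁻ z, ENNReal.ofReal (f u / p T x₀ u) * ENNReal.ofReal (p b z u)
            * ENNReal.ofReal (p r x z) ∂Vol ∂ν := lintegral_lintegral_swap hswapm.aemeasurable
      _ = ∫⁻ u, ENNReal.ofReal (f u / p T x₀ u)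
            * (∫⁻ z, ENNReal.ofReal (p r x z) * ENNReal.ofReal (p b z u) ∂Vol) ∂ν := by
          refine lintegral_congr fun u => ?_
          rw [← lintegral_const_mul _ (((hpm1 r x).ennreal_ofReal).fun_mul (hpmL b u).ennreal_ofReal)]
          exact lintegral_congr fun z => by ring
  -- the Markov property in lintegral form, for arbitrary nonnegative g
  have hsup : ∀ x : ℝ≥0∞, (⨆ n : ℕ, x ⊓ (n : ℝ≥0∞)) = x := by
    intro x
    refine le_antisymm (iSup_le fun n => inf_le_left) ?_
    rcases eq_or_ne x ∞ with h | h
    · subst h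
      simp only [top_inf_eq]
      exact le_of_eq ENNReal.iSup_natCast.symm
    · obtain ⟨n, hn⟩ := ENNReal.exists_nat_gt h
      exact le_trans (le_of_eq (inf_eq_left.mpr hn.le).symm) (le_iSup (fun n : ℕ => x ⊓ n) n)
  have hstar : ∀ s t : ℝ, 0 ≤ s → s < t → ∀ g : G → ℝ≥0∞, Measurable g →
      ∀ A : Set Ω, MeasurableSet[ℱ s] A →
      ∫⁻ ω in A, g (X t ω) ∂P
        = ∫⁻ ω in A, ∫⁻ z, g z * ENNReal.ofReal (p (t - s) (X s ω) z) ∂Vol ∂P := by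
    intro s t hs hst g hg A hA
    have ha : 0 < t - s := sub_pos.mpr hst
    have hXs : Measurable (X s) := hXm s hs
    have hXt : Measurable (X t) := hXm t (hs.trans hst.le)
    have hA' : MeasurableSet A := ℱ.le s A hA
    have key : ∀ n : ℕ,
        ∫⁻ ω in A, (g (X t ω) ⊓ n) ∂P
          = ∫⁻ ω in A, ∫⁻ z, (g z ⊓ n) * ENNReal.ofReal (p (t - s) (X s ω) z) ∂Vol ∂P := by
      intro n
      set gn : G → ℝ := fun z => (g z ⊓ n).toReal with hgn_def
      have hgn_meas : Measurable gn := (hg.inf measurable_const).ennreal_toReal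
      have hgn_nonneg : ∀ z, 0 ≤ gn z := fun z => ENNReal.toReal_nonneg
      have hgn_ne_top : ∀ z, (g z ⊓ (n : ℝ≥0∞)) ≠ ∞ := fun z =>
        ne_top_of_le_ne_top (ENNReal.natCast_ne_top n) inf_le_right
      have hgn_le : ∀ z, gn z ≤ n := fun z => by
        have : (g z ⊓ (n : ℝ≥0∞)).toReal ≤ ((n : ℝ≥0∞)).toReal :=
          ENNReal.toReal_mono (ENNReal.natCast_ne_top n) inf_le_right
        simpa using this
      have hgn_bdd : ∀ z, |gn z| ≤ n := fun z => by
        rw [abs_of_nonneg (hgn_nonneg z)]; exact hgn_le z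
      have hofReal : ∀ z, ENNReal.ofReal (gn z) = g z ⊓ n := fun z =>
        ENNReal.ofReal_toReal (hgn_ne_top z)
      have hmark := hMarkov s t hs hst gn hgn_meas ⟨n, hgn_bdd⟩
      have hgnXt_int : Integrable (fun ω => gn (X t ω)) P :=
        Integrable.mono' (integrable_const (n : ℝ)) (hgn_meas.comp hXt).aestronglyMeasurable
          (Filter.Eventually.of_forall fun ω => by
            rw [Real.norm_eq_abs]; exact hgn_bdd _)
      have hR_meas : Measurable fun x => ∫ z, gn z * p (t - s) x z ∂Vol := by
        have hm : Measurable fun q : G × G => gn q.2 * p (t - s) q.1 q.2 :=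
          (hgn_meas.comp measurable_snd).mul (hpm2 (t - s))
        exact hm.stronglyMeasurable.integral_prod_right'.measurable
      have hRz_int : ∀ x, Integrable (fun z => gn z * p (t - s) x z) Vol := fun x =>
        (hker (t - s) ha x).bdd_mul hgn_meas.aestronglyMeasurable
          (c := n) (Filter.Eventually.of_forall fun z => by rw [Real.norm_eq_abs]; exact hgn_bdd z)
      have hR_nonneg : ∀ x, 0 ≤ ∫ z, gn z * p (t - s) x z ∂Vol := fun x =>
        integral_nonneg fun z => mul_nonneg (hgn_nonneg z) (hp_nonneg _ _ _ ha)
      have hR_le : ∀ x, ∫ z, gn z * p (t - s) x z ∂Vol ≤ n := fun x => by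
        calc ∫ z, gn z * p (t - s) x z ∂Vol ≤ ∫ z, (n : ℝ) * p (t - s) x z ∂Vol :=
              integral_mono (hRz_int x) ((hker _ ha x).const_mul _)
                (fun z => mul_le_mul_of_nonneg_right (hgn_le z) (hp_nonneg _ _ _ ha))
          _ = (n : ℝ) * ∫ z, p (t - s) x z ∂Vol := integral_const_mul _ _
          _ = n := by rw [hp_norm (t - s) x ha, mul_one]
      have hRXs_int : Integrable (fun ω => ∫ z, gn z * p (t - s) (X s ω) z ∂Vol) P :=
        Integrable.mono' (integrable_const (n : ℝ))
          ((hR_meas.comp hXs)).aestronglyMeasurable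
          (Filter.Eventually.of_forall fun ω => by
            rw [Real.norm_eq_abs, abs_of_nonneg (hR_nonneg _)]; exact hR_le _)
      have hBoch : ∫ ω in A, gn (X t ω) ∂P
          = ∫ ω in A, (∫ z, gn z * p (t - s) (X s ω) z ∂Vol) ∂P := by
        rw [← setIntegral_condExp (ℱ.le s) hgnXt_int hA]
        exact setIntegral_congr_ae hA' (hmark.mono fun ω h _ => h)
      have hinner : ∀ x, ENNReal.ofReal (∫ z, gn z * p (t - s) x z ∂Vol)
          = ∫⁻ z, (g z ⊓ n) * ENNReal.ofReal (p (t - s) x z) ∂Vol := fun x => by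
        rw [ofReal_integral_eq_lintegral_ofReal (hRz_int x)
          (Filter.Eventually.of_forall fun z =>
            mul_nonneg (hgn_nonneg z) (hp_nonneg _ _ _ ha))]
        exact lintegral_congr fun z => by rw [ENNReal.ofReal_mul (hgn_nonneg z), hofReal]
      calc ∫⁻ ω in A, (g (X t ω) ⊓ n) ∂P
          = ∫⁻ ω in A, ENNReal.ofReal (gn (X t ω)) ∂P :=
            lintegral_congr fun ω => (hofReal _).symm
        _ = ENNReal.ofReal (∫ ω in A, gn (X t ω) ∂P) :=
            (ofReal_integral_eq_lintegral_ofReal hgnXt_int.integrableOn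
              (Filter.Eventually.of_forall fun ω => hgn_nonneg _)).symm
        _ = ENNReal.ofReal (∫ ω in A, (∫ z, gn z * p (t - s) (X s ω) z ∂Vol) ∂P) := by
            rw [hBoch]
        _ = ∫⁻ ω in A, ENNReal.ofReal (∫ z, gn z * p (t - s) (X s ω) z ∂Vol) ∂P :=
            ofReal_integral_eq_lintegral_ofReal hRXs_int.integrableOn
              (Filter.Eventually.of_forall fun ω => hR_nonneg _)
        _ = ∫⁻ ω in A, ∫⁻ z, (g z ⊓ n) * ENNReal.ofReal (p (t - s) (X s ω) z) ∂Vol ∂P :=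
            lintegral_congr fun ω => hinner _
    -- monotone convergence on both sides
    have hLHS : ∫⁻ ω in A, g (X t ω) ∂P = ⨆ n : ℕ, ∫⁻ ω in A, (g (X t ω) ⊓ n) ∂P := by
      have hm : ∀ n : ℕ, Measurable fun ω => g (X t ω) ⊓ (n : ℝ≥0∞) := fun n =>
        (hg.comp hXt).inf measurable_const
      rw [← lintegral_iSup hm
        (fun m n hmn ω => inf_le_inf_left _ (Nat.cast_le.mpr hmn))]
      exact lintegral_congr fun ω => (hsup _).symm
    have hmeasR : ∀ n : ℕ, Measurable fun ω =>
        ∫⁻ z, (g z ⊓ n) * ENNReal.ofReal (p (t - s) (X s ω) z) ∂Vol := by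
      intro n
      have hm : Measurable fun q : G × G =>
          (g q.2 ⊓ (n : ℝ≥0∞)) * ENNReal.ofReal (p (t - s) q.1 q.2) :=
        ((hg.comp measurable_snd).inf measurable_const).mul (hpm2 (t - s)).ennreal_ofReal
      exact hm.lintegral_prod_right'.comp hXs
    have hRHS : ∫⁻ ω in A, ∫⁻ z, g z * ENNReal.ofReal (p (t - s) (X s ω) z) ∂Vol ∂P
        = ⨆ n : ℕ, ∫⁻ ω in A, ∫⁻ z, (g z ⊓ n) * ENNReal.ofReal (p (t - s) (X s ω) z) ∂Vol ∂P := by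
      rw [← lintegral_iSup hmeasR (fun m n hmn ω =>
        lintegral_mono fun z => mul_le_mul_left (inf_le_inf_left _ (Nat.cast_le.mpr hmn)) _)]
      refine lintegral_congr fun ω => ?_
      have hm : ∀ n : ℕ, Measurable fun z =>
          (g z ⊓ (n : ℝ≥0∞)) * ENNReal.ofReal (p (t - s) (X s ω) z) := fun n =>
        (hg.inf measurable_const).mul ((hpm1 (t - s) (X s ω)).ennreal_ofReal)
      rw [← lintegral_iSup hm
        (fun m n hmn z => mul_le_mul_left (inf_le_inf_left _ (Nat.cast_le.mpr hmn)) _)]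
      refine lintegral_congr fun z => ?_
      rw [← ENNReal.iSup_mul, hsup]
    rw [hLHS, hRHS]
    exact iSup_congr key
  -- the key constant computation at x₀
  have hconst : ∀ t : ℝ, 0 < t → t < T →
      ∫⁻ z, (∫⁻ u, ENNReal.ofReal (f u / p T x₀ u) * ENNReal.ofReal (p (T - t) z u) ∂ν)
          * ENNReal.ofReal (p t x₀ z) ∂Vol
        = ENNReal.ofReal (∫ u, f u ∂ν) := by
    intro t ht htT
    rw [hTon (T - t) t x₀]
    have h1 : ∫⁻ u, ENNReal.ofReal (f u / p T x₀ u)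
          * (∫⁻ z, ENNReal.ofReal (p t x₀ z) * ENNReal.ofReal (p (T - t) z u) ∂Vol) ∂ν
        = ∫⁻ u, ENNReal.ofReal (f u) ∂ν := by
      refine lintegral_congr_ae ?_
      filter_upwards [hCK0 t (T - t) ht (by linarith) (by ring), hpT_pos] with u hu hpos
      rw [hu, ← ENNReal.ofReal_mul (div_nonneg (hf_nonneg u) (hp_nonneg T x₀ u hT)),
        div_mul_cancel₀ _ (ne_of_gt hpos)]
    rw [h1]
    exact (ofReal_integral_eq_lintegral_ofReal hf_int
      (Filter.Eventually.of_forall hf_nonneg)).symm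
  -- the mean of the lintegral process is constant
  have hmean : ∀ t : ℝ, 0 < t → t < T →
      ∫⁻ ω, (∫⁻ u, ENNReal.ofReal (f u / p T x₀ u)
          * ENNReal.ofReal (p (T - t) (X t ω) u) ∂ν) ∂P
        = ENNReal.ofReal (∫ u, f u ∂ν) := by
    intro t ht htT
    have hst := hstar 0 t le_rfl ht (fun z =>
      ∫⁻ u, ENNReal.ofReal (f u / p T x₀ u) * ENNReal.ofReal (p (T - t) z u) ∂ν)
      (hΨmeas (T - t)) Set.univ MeasurableSet.univ
    rw [Measure.restrict_univ] at hst
    rw [hst]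
    have h2 : ∀ᵐ ω ∂P, (∫⁻ z, (∫⁻ u, ENNReal.ofReal (f u / p T x₀ u)
          * ENNReal.ofReal (p (T - t) z u) ∂ν) * ENNReal.ofReal (p (t - 0) (X 0 ω) z) ∂Vol)
        = ENNReal.ofReal (∫ u, f u ∂ν) := by
      filter_upwards [hX0] with ω hω
      rw [hω, sub_zero]
      exact hconst t ht htT
    rw [lintegral_congr_ae h2]
    simp
  -- value at time 0 at the starting point
  have hφ0 : ∫ u, f u * (p (T - 0) x₀ u / p T x₀ u) ∂ν = ∫ u, f u ∂ν := by
    refine integral_congr_ae ?_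
    filter_upwards [hpT_pos] with u hu
    rw [sub_zero, div_self (ne_of_gt hu), mul_one]
  -- integrability and mean for 0 < t < T
  have hmain : ∀ t : ℝ, 0 < t → t < T →
      Integrable (fun ω => ∫ u, f u * (p (T - t) (X t ω) u / p T x₀ u) ∂ν) P ∧
      ∫ ω, (∫ u, f u * (p (T - t) (X t ω) u / p T x₀ u) ∂ν) ∂P = ∫ u, f u ∂ν := by
    intro t ht htT
    have hXt := hXm t ht.le
    have hmeasω : Measurable fun ω => ∫ u, f u * (p (T - t) (X t ω) u / p T x₀ u) ∂ν :=
      (hφmeas (T - t)).comp hXt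
    have hnn : ∀ ω, 0 ≤ ∫ u, f u * (p (T - t) (X t ω) u / p T x₀ u) ∂ν := fun ω =>
      integral_nonneg fun u => mul_nonneg (hf_nonneg u)
        (div_nonneg (hp_nonneg _ _ _ (by linarith)) (hp_nonneg T x₀ u hT))
    have hlint : ∫⁻ ω, ENNReal.ofReal (∫ u, f u * (p (T - t) (X t ω) u / p T x₀ u) ∂ν) ∂P
        = ENNReal.ofReal (∫ u, f u ∂ν) := by
      rw [lintegral_congr fun ω => (hΨφ t ht htT (X t ω)).symm]
      exact hmean t ht htT
    have hint : Integrable (fun ω => ∫ u, f u * (p (T - t) (X t ω) u / p T x₀ u) ∂ν) P := by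
      refine ⟨hmeasω.aestronglyMeasurable, ?_⟩
      rw [hasFiniteIntegral_iff_ofReal (Filter.Eventually.of_forall hnn), hlint]
      exact ENNReal.ofReal_lt_top
    refine ⟨hint, ?_⟩
    rw [integral_eq_lintegral_of_nonneg_ae (Filter.Eventually.of_forall hnn)
      hmeasω.aestronglyMeasurable, hlint, ENNReal.toReal_ofReal hf_pos.le]
  have hφ0' : ∫ u, f u * (p T x₀ u / p T x₀ u) ∂ν = ∫ u, f u ∂ν := by
    refine integral_congr_ae ?_
    filter_upwards [hpT_pos] with u hu
    rw [div_self (ne_of_gt hu), mul_one]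
  -- the key a.e. identification of the conditional kernel integral
  have hKey : ∀ s t : ℝ, 0 ≤ s → s < t → t < T →
      (fun ω => ∫⁻ z, (∫⁻ u, ENNReal.ofReal (f u / p T x₀ u)
            * ENNReal.ofReal (p (T - t) z u) ∂ν)
          * ENNReal.ofReal (p (t - s) (X s ω) z) ∂Vol)
        =ᵐ[P] fun ω =>
          ENNReal.ofReal (∫ u, f u * (p (T - s) (X s ω) u / p T x₀ u) ∂ν) := by
    intro s t hs hst htT
    rcases eq_or_lt_of_le hs with hs0 | hs0
    · subst hs0
      have ht : 0 < t := hst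
      filter_upwards [hX0] with ω hω
      rw [hω]
      simp only [sub_zero]
      rw [hφ0']
      exact hconst t ht htT
    · have hsT : s < T := hst.trans htT
      have ht : 0 < t := hs0.trans hst
      have hge : ∀ x : G,
          (∫⁻ u, ENNReal.ofReal (f u / p T x₀ u) * ENNReal.ofReal (p (T - s) x u) ∂ν)
            ≤ ∫⁻ z, (∫⁻ u, ENNReal.ofReal (f u / p T x₀ u)
                * ENNReal.ofReal (p (T - t) z u) ∂ν)
              * ENNReal.ofReal (p (t - s) x z) ∂Vol := by
        intro x
        rw [hTon (T - t) (t - s) x]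
        refine lintegral_mono fun u => mul_le_mul_right ?_ _
        have h := hCKge (t - s) (T - t) (sub_pos.mpr hst) (by linarith) x u
        rw [show t - s + (T - t) = T - s by ring] at h
        exact h
      have hl1 : ∫⁻ ω, (∫⁻ z, (∫⁻ u, ENNReal.ofReal (f u / p T x₀ u)
            * ENNReal.ofReal (p (T - t) z u) ∂ν)
            * ENNReal.ofReal (p (t - s) (X s ω) z) ∂Vol) ∂P
          = ENNReal.ofReal (∫ u, f u ∂ν) := by
        have hst2 := hstar s t hs hst (fun z =>
          ∫⁻ u, ENNReal.ofReal (f u / p T x₀ u) * ENNReal.ofReal (p (T - t) z u) ∂ν)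
          (hΨmeas (T - t)) Set.univ MeasurableSet.univ
        rw [Measure.restrict_univ] at hst2
        rw [← hst2]
        exact hmean t ht htT
      have hl2 : ∫⁻ ω, (∫⁻ u, ENNReal.ofReal (f u / p T x₀ u)
            * ENNReal.ofReal (p (T - s) (X s ω) u) ∂ν) ∂P
          = ENNReal.ofReal (∫ u, f u ∂ν) := hmean s hs0 hsT
      have hmK : Measurable fun ω => ∫⁻ z, (∫⁻ u, ENNReal.ofReal (f u / p T x₀ u)
            * ENNReal.ofReal (p (T - t) z u) ∂ν)
          * ENNReal.ofReal (p (t - s) (X s ω) z) ∂Vol := by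
        have hm : Measurable fun q : G × G => (∫⁻ u, ENNReal.ofReal (f u / p T x₀ u)
              * ENNReal.ofReal (p (T - t) q.2 u) ∂ν)
            * ENNReal.ofReal (p (t - s) q.1 q.2) :=
          ((hΨmeas (T - t)).comp measurable_snd).mul (hpm2 (t - s)).ennreal_ofReal
        exact hm.lintegral_prod_right'.comp (hXm s hs)
      have hae : (fun ω => ∫⁻ u, ENNReal.ofReal (f u / p T x₀ u)
            * ENNReal.ofReal (p (T - s) (X s ω) u) ∂ν)
          =ᵐ[P] fun ω => ∫⁻ z, (∫⁻ u, ENNReal.ofReal (f u / p T x₀ u)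
              * ENNReal.ofReal (p (T - t) z u) ∂ν)
            * ENNReal.ofReal (p (t - s) (X s ω) z) ∂Vol :=
        ae_eq_of_ae_le_of_lintegral_le
          (Filter.Eventually.of_forall fun ω => hge (X s ω))
          (by rw [hl2]; exact ENNReal.ofReal_ne_top)
          hmK.aemeasurable (le_of_eq (hl1.trans hl2.symm))
      exact hae.symm.trans (Filter.Eventually.of_forall fun ω => hΨφ s hs0 hsT (X s ω))
  -- set-integral equality
  have hnnφ : ∀ τ : ℝ, τ < T → ∀ x : G,
      0 ≤ ∫ u, f u * (p (T - τ) x u / p T x₀ u) ∂ν := fun τ hτ x =>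
    integral_nonneg fun u => mul_nonneg (hf_nonneg u)
      (div_nonneg (hp_nonneg _ _ _ (by linarith)) (hp_nonneg T x₀ u hT))
  have hSet : ∀ s t : ℝ, 0 ≤ s → s < t → t < T → ∀ A : Set Ω, MeasurableSet[ℱ s] A →
      ∫ ω in A, (∫ u, f u * (p (T - t) (X t ω) u / p T x₀ u) ∂ν) ∂P
        = ∫ ω in A, (∫ u, f u * (p (T - s) (X s ω) u / p T x₀ u) ∂ν) ∂P := by
    intro s t hs hst htT A hA
    have ht : 0 < t := hs.trans_lt hst
    have hL : ∫⁻ ω in A, ENNReal.ofReal (∫ u, f u * (p (T - t) (X t ω) u / p T x₀ u) ∂ν) ∂P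
        = ∫⁻ ω in A, ENNReal.ofReal (∫ u, f u * (p (T - s) (X s ω) u / p T x₀ u) ∂ν) ∂P := by
      calc ∫⁻ ω in A, ENNReal.ofReal (∫ u, f u * (p (T - t) (X t ω) u / p T x₀ u) ∂ν) ∂P
          = ∫⁻ ω in A, (∫⁻ u, ENNReal.ofReal (f u / p T x₀ u)
              * ENNReal.ofReal (p (T - t) (X t ω) u) ∂ν) ∂P :=
            lintegral_congr fun ω => (hΨφ t ht htT _).symm
        _ = ∫⁻ ω in A, (∫⁻ z, (∫⁻ u, ENNReal.ofReal (f u / p T x₀ u)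
              * ENNReal.ofReal (p (T - t) z u) ∂ν)
            * ENNReal.ofReal (p (t - s) (X s ω) z) ∂Vol) ∂P :=
            hstar s t hs hst _ (hΨmeas (T - t)) A hA
        _ = ∫⁻ ω in A, ENNReal.ofReal (∫ u, f u * (p (T - s) (X s ω) u / p T x₀ u) ∂ν) ∂P :=
            lintegral_congr_ae (ae_restrict_of_ae (hKey s t hs hst htT))
    rw [integral_eq_lintegral_of_nonneg_ae
        (Filter.Eventually.of_forall fun ω => hnnφ t htT (X t ω))
        ((hφmeas (T - t)).comp (hXm t ht.le)).aestronglyMeasurable.restrict,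
      integral_eq_lintegral_of_nonneg_ae
        (Filter.Eventually.of_forall fun ω => hnnφ s (hst.trans htT) (X s ω))
        ((hφmeas (T - s)).comp (hXm s hs)).aestronglyMeasurable.restrict,
      hL]
  -- time-0 a.e. value
  have hae1 : (fun ω => (∫ u, f u * (p (T - 0) (X 0 ω) u / p T x₀ u) ∂ν)
      / (∫ u, f u ∂ν)) =ᵐ[P] fun _ => (1 : ℝ) := by
    filter_upwards [hX0] with ω hω
    rw [hω, hφ0, div_self hcne]
  -- part 1
  have hpart1 : ∀ t : ℝ, 0 ≤ t → t < T →
      Integrable (fun ω =>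
        (∫ u, f u * (p (T - t) (X t ω) u / p T x₀ u) ∂ν) / (∫ u, f u ∂ν)) P ∧
      ∫ ω, (∫ u, f u * (p (T - t) (X t ω) u / p T x₀ u) ∂ν) / (∫ u, f u ∂ν) ∂P = 1 := by
    intro t ht htT
    rcases eq_or_lt_of_le ht with h0 | h0
    · subst h0
      constructor
      · exact (integrable_const (1 : ℝ)).congr hae1.symm
      · rw [integral_congr_ae hae1]
        simp
    · obtain ⟨hint, hval⟩ := hmain t h0 htT
      refine ⟨hint.div_const _, ?_⟩
      rw [integral_div, hval, div_self hcne]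
  refine ⟨hpart1, ?_, ?_⟩
  · -- martingale property
    intro s t hs hst htT
    rcases eq_or_lt_of_le hst with hst0 | hst0
    · subst hst0
      have hsm : StronglyMeasurable[ℱ s] fun ω =>
          (∫ u, f u * (p (T - s) (X s ω) u / p T x₀ u) ∂ν) / (∫ u, f u ∂ν) :=
        (((hφmeas (T - s)).comp (hX_adapted s hs)).div measurable_const).stronglyMeasurable
      rw [condExp_of_stronglyMeasurable (ℱ.le s) hsm ((hpart1 s hs htT).1)]
    · refine (ae_eq_condExp_of_forall_setIntegral_eq (ℱ.le s)
        (hpart1 t (hs.trans hst) htT).1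
        (fun A hA _ => ((hpart1 s hs (hst0.trans htT)).1).integrableOn)
        (fun A hA _ => ?_) ?_).symm
      · rw [integral_div, integral_div, hSet s t hs hst0 htT A hA]
      · exact StronglyMeasurable.aestronglyMeasurable
          ((((hφmeas (T - s)).comp (hX_adapted s hs)).div measurable_const).stronglyMeasurable)
  · -- h(0, X_0) = 1 a.s.
    exact hae1
end

section
/- Assume in addition that p_t(x,y) > 0 for all t > 0 and x,y ∈ G, that D := ∫_G f(u) p_T(x₀, u) dν(u) ∈ (0,∞), and that ∫_G f(u) p_{T−t}(x, u) dν(u) < ∞ for all t ∈ (0,T), x ∈ G. Fix 0 ≤ s < t < T, let Z_t := (∫_G f(u) p_{T−t}(X_t, u) dν(u)) / D, and let ℚ be the measure on (Ω, F) with density Z_t with respect to ℙ. Then ℚ is a probability measure and, for every bounded measurable F : G → ℝ, the ℚ-conditional expectation of F(X_t) given F_s satisfies, ℚ-almost surely, E_ℚ[F(X_t) | F_s] = ∫_G k(X_s, u) · (∫_G F(x) · p_{t−s}(X_s, x) · p_{T−t}(x, u) / p_{T−s}(X_s, u) dVol(x)) dν(u), where k(y, u) := f(u) p_{T−s}(y,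 u) / (∫_G f(u') p_{T−s}(y, u') dν(u')). That is, under the change of measure, the conditional law of X_t given F_s is the ν-mixture of bridge transition laws with mixing density k(X_s, ·). -/
open MeasureTheory
open scoped ENNReal NNReal

lemma aux_iSup_min (a : ℝ≥0∞) : ⨆ n : ℕ, min a (n : ℝ≥0∞) = a := by
  apply le_antisymm (iSup_le fun n => min_le_left _ _)
  rcases eq_or_ne a ⊤ with h | h
  · subst h
    calc (⊤ : ℝ≥0∞) = ⨆ n : ℕ, (n : ℝ≥0∞) := ENNReal.iSup_natCast.symm
    _ ≤ ⨆ n : ℕ, min (⊤ : ℝ≥0∞) (n : ℝ≥0∞) := iSup_mono fun n => by simp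
  · obtain ⟨n, hn⟩ := ENNReal.exists_nat_gt h
    calc a = min a (n : ℝ≥0∞) := (min_eq_left hn.le).symm
    _ ≤ ⨆ n : ℕ, min a (n : ℝ≥0∞) := le_iSup (fun n : ℕ => min a (n : ℝ≥0∞)) n

lemma aux_integrable_of_integral_pos {α : Type*} [MeasurableSpace α] {μ : Measure α}
    {g : α → ℝ} (h : 0 < ∫ x, g x ∂μ) : Integrable g μ := by
  by_contra hg
  rw [integral_undef hg] at h
  exact lt_irrefl 0 h

lemma aux_markovL
    {G : Type*} [MeasurableSpace G] {Vol : Measure G} [SigmaFinite Vol]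
    {Ω : Type*} {mΩ : MeasurableSpace Ω} {P : Measure Ω} [IsProbabilityMeasure P]
    {ℱ : Filtration ℝ mΩ} {p : ℝ → G → G → ℝ} {X : ℝ → Ω → G}
    (hp_meas : Measurable fun q : ℝ × G × G => p q.1 q.2.1 q.2.2)
    (hp_nonneg : ∀ t x y, 0 < t → 0 ≤ p t x y)
    (hp_norm : ∀ t x, 0 < t → ∫ y, p t x y ∂Vol = 1)
    (hX_adapted : ∀ t : ℝ, 0 ≤ t → Measurable[ℱ t] (X t))
    (hMarkov : ∀ s t : ℝ, 0 ≤ s → s < t → ∀ f : G → ℝ, Measurable f →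
        (∃ C, ∀ y, |f y| ≤ C) →
        P[(fun ω => f (X t ω)) | ℱ s] =ᵐ[P] fun ω => ∫ z, f z * p (t - s) (X s ω) z ∂Vol)
    {s t : ℝ} (hs : 0 ≤ s) (hst : s < t)
    (φ : G → ℝ≥0∞) (hφ : Measurable φ)
    {A : Set Ω} (hA : MeasurableSet[ℱ s] A) :
    ∫⁻ ω in A, φ (X t ω) ∂P
      = ∫⁻ ω in A, ∫⁻ z, φ z * ENNReal.ofReal (p (t - s) (X s ω) z) ∂Vol ∂P := by
  have hts : 0 < t - s := sub_pos.2 hst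
  have ht0 : 0 ≤ t := hs.trans hst.le
  have hXt : Measurable (X t) := (hX_adapted t ht0).mono (ℱ.le t) le_rfl
  have hXs : Measurable (X s) := (hX_adapted s hs).mono (ℱ.le s) le_rfl
  have hmA : MeasurableSet A := ℱ.le s _ hA
  have hpa : ∀ a : ℝ, Measurable fun q : G × G => p a q.1 q.2 :=
    fun a => hp_meas.comp (measurable_const.prodMk measurable_id)
  have hp1 : ∀ y : G, Integrable (fun z => p (t - s) y z) Vol := by
    intro y
    apply aux_integrable_of_integral_pos (g := fun z => p (t - s) y z)
    rw [hp_norm _ y hts]; norm_num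
  -- bounded approximations
  set b : ℕ → G → ℝ := fun n z => (min (φ z) n).toReal with hb
  have hb_meas : ∀ n, Measurable (b n) := fun n => (hφ.min measurable_const).ennreal_toReal
  have hb_nonneg : ∀ n z, 0 ≤ b n z := fun n z => ENNReal.toReal_nonneg
  have hb_ne_top : ∀ (n : ℕ) (z : G), min (φ z) (n : ℝ≥0∞) ≠ ⊤ :=
    fun n z => ne_top_of_le_ne_top (ENNReal.natCast_ne_top n) (min_le_right _ _)
  have hb_le : ∀ n z, b n z ≤ n := by
    intro n z
    rw [hb]
    calc (min (φ z) (n : ℝ≥0∞)).toReal ≤ ((n : ℝ≥0∞)).toReal :=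
      ENNReal.toReal_mono (ENNReal.natCast_ne_top n) (min_le_right _ _)
    _ = n := by simp
  have hb_ofReal : ∀ n z, ENNReal.ofReal (b n z) = min (φ z) n :=
    fun n z => ENNReal.ofReal_toReal (hb_ne_top n z)
  -- step 1: real set-integral identity for each n
  have step1 : ∀ n : ℕ, ∫ ω in A, b n (X t ω) ∂P
      = ∫ ω in A, ∫ z, b n z * p (t - s) (X s ω) z ∂Vol ∂P := by
    intro n
    have hbd : ∃ C, ∀ y, |b n y| ≤ C := ⟨n, fun y => by
      rw [abs_of_nonneg (hb_nonneg n y)]; exact hb_le n y⟩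
    have hint : Integrable (fun ω => b n (X t ω)) P := by
      refine Integrable.mono' (integrable_const (n : ℝ))
        ((hb_meas n).comp hXt).aestronglyMeasurable ?_
      exact Filter.Eventually.of_forall fun ω => by
        rw [Real.norm_eq_abs, abs_of_nonneg (hb_nonneg n _)]; exact hb_le n _
    have := hMarkov s t hs hst (b n) (hb_meas n) hbd
    calc ∫ ω in A, b n (X t ω) ∂P = ∫ ω in A, (P[(fun ω => b n (X t ω)) | ℱ s]) ω ∂P :=
      (setIntegral_condExp (ℱ.le s) hint hA).symm
    _ = ∫ ω in A, ∫ z, b n z * p (t - s) (X s ω) z ∂Vol ∂P :=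
      integral_congr_ae (ae_restrict_of_ae this)
  -- step 2: lintegral identity for each n
  have step2 : ∀ n : ℕ, ∫⁻ ω in A, min (φ (X t ω)) n ∂P
      = ∫⁻ ω in A, ∫⁻ z, min (φ z) n * ENNReal.ofReal (p (t - s) (X s ω) z) ∂Vol ∂P := by
    intro n
    have hint : Integrable (fun ω => b n (X t ω)) (P.restrict A) := by
      refine Integrable.mono' (integrable_const (n : ℝ))
        ((hb_meas n).comp hXt).aestronglyMeasurable ?_
      exact Filter.Eventually.of_forall fun ω => by
        rw [Real.norm_eq_abs, abs_of_nonneg (hb_nonneg n _)]; exact hb_le n _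
    have hbz_int : ∀ y : G, Integrable (fun z => b n z * p (t - s) y z) Vol := by
      intro y
      refine Integrable.mono' ((hp1 y).const_mul (n : ℝ))
        ((hb_meas n).mul ((hpa (t - s)).comp (measurable_const.prodMk measurable_id))).aestronglyMeasurable
        (Filter.Eventually.of_forall fun z => ?_)
      rw [Real.norm_eq_abs, abs_mul, abs_of_nonneg (hb_nonneg n z),
        abs_of_nonneg (hp_nonneg _ _ _ hts)]
      exact mul_le_mul_of_nonneg_right (hb_le n z) (hp_nonneg _ _ _ hts)
    have hr_meas : Measurable fun y : G => ∫ z, b n z * p (t - s) y z ∂Vol := by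
      have : StronglyMeasurable fun q : G × G => b n q.2 * p (t - s) q.1 q.2 :=
        (((hb_meas n).comp measurable_snd).mul (hpa (t - s))).stronglyMeasurable
      exact this.integral_prod_right'.measurable
    have hr_nonneg : ∀ y, 0 ≤ ∫ z, b n z * p (t - s) y z ∂Vol := fun y =>
      integral_nonneg fun z => mul_nonneg (hb_nonneg n z) (hp_nonneg _ _ _ hts)
    have hr_le : ∀ y : G, (∫ z, b n z * p (t - s) y z ∂Vol) ≤ n := by
      intro y
      calc (∫ z, b n z * p (t - s) y z ∂Vol) ≤ ∫ z, (n : ℝ) * p (t - s) y z ∂Vol := by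
            refine integral_mono (hbz_int y) ((hp1 y).const_mul _) fun z => ?_
            exact mul_le_mul_of_nonneg_right (hb_le n z) (hp_nonneg _ _ _ hts)
      _ = n := by rw [integral_const_mul, hp_norm _ y hts, mul_one]
    have hrint : Integrable (fun ω => ∫ z, b n z * p (t - s) (X s ω) z ∂Vol) (P.restrict A) := by
      refine Integrable.mono' (integrable_const (n : ℝ))
        (hr_meas.comp hXs).aestronglyMeasurable
        (Filter.Eventually.of_forall fun ω => ?_)
      rw [Real.norm_eq_abs, abs_of_nonneg (hr_nonneg _)]; exact hr_le _
    have l1 : ∫⁻ ω in A, min (φ (X t ω)) n ∂P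
        = ENNReal.ofReal (∫ ω in A, b n (X t ω) ∂P) := by
      rw [ofReal_integral_eq_lintegral_ofReal hint
        (Filter.Eventually.of_forall fun ω => hb_nonneg n _)]
      exact lintegral_congr fun ω => (hb_ofReal n _).symm
    have l2 : ∫⁻ ω in A, ∫⁻ z, min (φ z) n * ENNReal.ofReal (p (t - s) (X s ω) z) ∂Vol ∂P
        = ENNReal.ofReal (∫ ω in A, ∫ z, b n z * p (t - s) (X s ω) z ∂Vol ∂P) := by
      rw [ofReal_integral_eq_lintegral_ofReal hrint
        (Filter.Eventually.of_forall fun ω => hr_nonneg _)]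
      refine lintegral_congr fun ω => ?_
      rw [ofReal_integral_eq_lintegral_ofReal (hbz_int _)
        (Filter.Eventually.of_forall fun z => mul_nonneg (hb_nonneg n z) (hp_nonneg _ _ _ hts))]
      refine lintegral_congr fun z => ?_
      rw [ENNReal.ofReal_mul (hb_nonneg n z), hb_ofReal]
    rw [l1, l2, step1 n]
  -- step 3: monotone convergence
  have mono_min : ∀ z : ℝ≥0∞, Monotone fun n : ℕ => min z (n : ℝ≥0∞) := fun z i j hij =>
    min_le_min le_rfl (by exact_mod_cast hij)
  have lhs_eq : ∫⁻ ω in A, φ (X t ω) ∂P = ⨆ n : ℕ, ∫⁻ ω in A, min (φ (X t ω)) n ∂P := by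
    rw [← lintegral_iSup (f := fun (n : ℕ) ω => min (φ (X t ω)) (n : ℝ≥0∞))
      (fun n => (hφ.comp hXt).min measurable_const)
      (fun i j hij ω => mono_min _ hij)]
    exact lintegral_congr fun ω => (aux_iSup_min _).symm
  have inner_eq : ∀ y : G, ∫⁻ z, φ z * ENNReal.ofReal (p (t - s) y z) ∂Vol
      = ⨆ n : ℕ, ∫⁻ z, min (φ z) n * ENNReal.ofReal (p (t - s) y z) ∂Vol := by
    intro y
    rw [← lintegral_iSup
      (f := fun (n : ℕ) z => min (φ z) (n : ℝ≥0∞) * ENNReal.ofReal (p (t - s) y z))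
      (fun n => (hφ.min measurable_const).mul
        (((hpa (t - s)).comp (measurable_const.prodMk measurable_id)).ennreal_ofReal))
      (fun i j hij z => mul_le_mul_left (mono_min _ hij) _)]
    refine lintegral_congr fun z => ?_
    rw [← ENNReal.iSup_mul, aux_iSup_min]
  have rhs_meas : ∀ n : ℕ, Measurable fun ω =>
      ∫⁻ z, min (φ z) n * ENNReal.ofReal (p (t - s) (X s ω) z) ∂Vol := by
    intro n
    have : Measurable fun q : G × G => min (φ q.2) n * ENNReal.ofReal (p (t - s) q.1 q.2) :=
      ((hφ.comp measurable_snd).min measurable_const).mul ((hpa (t - s)).ennreal_ofReal)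
    exact (Measurable.lintegral_prod_right' this).comp hXs
  have rhs_eq : ∫⁻ ω in A, ∫⁻ z, φ z * ENNReal.ofReal (p (t - s) (X s ω) z) ∂Vol ∂P
      = ⨆ n : ℕ, ∫⁻ ω in A, ∫⁻ z, min (φ z) n * ENNReal.ofReal (p (t - s) (X s ω) z) ∂Vol ∂P := by
    rw [← lintegral_iSup
      (f := fun (n : ℕ) ω => ∫⁻ z, min (φ z) (n : ℝ≥0∞) * ENNReal.ofReal (p (t - s) (X s ω) z) ∂Vol)
      rhs_meas
      (fun i j hij ω => lintegral_mono fun z => mul_le_mul_left (mono_min _ hij) _)]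
    exact lintegral_congr fun ω => (inner_eq _).trans (by rfl)
  rw [lhs_eq, rhs_eq]
  exact iSup_congr step2

lemma aux_ck {G : Type*} [MeasurableSpace G] {Vol : Measure G}
    {p : ℝ → G → G → ℝ}
    (hp_meas : Measurable fun q : ℝ × G × G => p q.1 q.2.1 q.2.2)
    (hp_nonneg : ∀ t x y, 0 < t → 0 ≤ p t x y)
    (hp_ck : ∀ s t : ℝ, 0 < s → 0 < t → ∀ x y,
      p (t + s) x y = ∫ z, p t x z * p s z y ∂Vol)
    (hp_pos : ∀ t x y, 0 < t → 0 < p t x y)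
    {a b : ℝ} (ha : 0 < a) (hb : 0 < b) (x y : G) :
    Integrable (fun z => p a x z * p b z y) Vol ∧
      ∫⁻ z, ENNReal.ofReal (p a x z) * ENNReal.ofReal (p b z y) ∂Vol
        = ENNReal.ofReal (p (a + b) x y) := by
  have hck := hp_ck b a hb ha x y
  have hint : Integrable (fun z => p a x z * p b z y) Vol := by
    apply aux_integrable_of_integral_pos (g := fun z => p a x z * p b z y)
    rw [← hck]; exact hp_pos _ _ _ (by linarith)
  refine ⟨hint, ?_⟩
  have h2 := ofReal_integral_eq_lintegral_ofReal hint (Filter.Eventually.of_forall fun z =>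
    mul_nonneg (hp_nonneg _ _ _ ha) (hp_nonneg _ _ _ hb))
  rw [hck, h2]
  exact lintegral_congr fun z => (ENNReal.ofReal_mul (hp_nonneg _ _ _ ha)).symm

lemma aux_K2 {G : Type*} [MeasurableSpace G] {Vol : Measure G} [SigmaFinite Vol]
    {ν : Measure G} [SigmaFinite ν]
    {p : ℝ → G → G → ℝ} {f : G → ℝ}
    (hp_meas : Measurable fun q : ℝ × G × G => p q.1 q.2.1 q.2.2)
    (hp_nonneg : ∀ t x y, 0 < t → 0 ≤ p t x y)
    (hp_ck : ∀ s t : ℝ, 0 < s → 0 < t → ∀ x y,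
      p (t + s) x y = ∫ z, p t x z * p s z y ∂Vol)
    (hp_pos : ∀ t x y, 0 < t → 0 < p t x y)
    (hf_meas : Measurable f)
    {a b : ℝ} (ha : 0 < a) (hb : 0 < b) (x : G) :
    ∫⁻ z, (∫⁻ u, ENNReal.ofReal (f u) * ENNReal.ofReal (p b z u) ∂ν)
        * ENNReal.ofReal (p a x z) ∂Vol
      = ∫⁻ u, ENNReal.ofReal (f u) * ENNReal.ofReal (p (a + b) x u) ∂ν := by
  have hpa : ∀ c : ℝ, Measurable fun q : G × G => p c q.1 q.2 :=
    fun c => hp_meas.comp (measurable_const.prodMk measurable_id)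
  calc ∫⁻ z, (∫⁻ u, ENNReal.ofReal (f u) * ENNReal.ofReal (p b z u) ∂ν)
        * ENNReal.ofReal (p a x z) ∂Vol
      = ∫⁻ z, ∫⁻ u, ENNReal.ofReal (f u) * ENNReal.ofReal (p b z u)
          * ENNReal.ofReal (p a x z) ∂ν ∂Vol := by
        refine lintegral_congr fun z => ?_
        rw [lintegral_mul_const' _ _ ENNReal.ofReal_ne_top]
    _ = ∫⁻ u, ∫⁻ z, ENNReal.ofReal (f u) * ENNReal.ofReal (p b z u)
          * ENNReal.ofReal (p a x z) ∂Vol ∂ν := by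
        refine lintegral_lintegral_swap ?_
        apply Measurable.aemeasurable
        exact ((hf_meas.comp measurable_snd).ennreal_ofReal.mul
          ((hpa b).comp (measurable_fst.prodMk measurable_snd)).ennreal_ofReal).mul
          ((hpa a).comp (measurable_const.prodMk measurable_fst)).ennreal_ofReal
    _ = ∫⁻ u, ENNReal.ofReal (f u) * ∫⁻ z, ENNReal.ofReal (p a x z)
          * ENNReal.ofReal (p b z u) ∂Vol ∂ν := by
        refine lintegral_congr fun u => ?_
        rw [← lintegral_const_mul' _ _ ENNReal.ofReal_ne_top]
        refine lintegral_congr fun z => ?_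
        ring
    _ = ∫⁻ u, ENNReal.ofReal (f u) * ENNReal.ofReal (p (a + b) x u) ∂ν := by
        refine lintegral_congr fun u => ?_
        rw [(aux_ck hp_meas hp_nonneg hp_ck hp_pos ha hb x u).2]

/-- Under the change of measure `dℚ = Z_t dℙ` with
`Z_t = (∫ f(u) p_{T-t}(X_t,u) dν(u)) / D`, `ℚ` is a probability measure and the
conditional law of `X_t` given `ℱ_s` under `ℚ` is the `ν`-mixture of bridge transition
laws with mixing density `k(X_s, ·)`, where
`k(y,u) = f(u) p_{T-s}(y,u) / ∫ f(u') p_{T-s}(y,u') dν(u')`. -/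
theorem tilted_conditional_law_eq_mixture_of_bridges
    {G : Type*} [MeasurableSpace G] (Vol : Measure G) [SigmaFinite Vol]
    {Ω : Type*} {mΩ : MeasurableSpace Ω} (P : Measure Ω) [IsProbabilityMeasure P]
    (ℱ : Filtration ℝ mΩ)
    (p : ℝ → G → G → ℝ)
    (hp_meas : Measurable fun q : ℝ × G × G => p q.1 q.2.1 q.2.2)
    (hp_nonneg : ∀ t x y, 0 < t → 0 ≤ p t x y)
    (hp_symm : ∀ t x y, 0 < t → p t x y = p t y x)
    (hp_ck : ∀ s t : ℝ, 0 < s → 0 < t → ∀ x y,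
      p (t + s) x y = ∫ z, p t x z * p s z y ∂Vol)
    (hp_norm : ∀ t x, 0 < t → ∫ y, p t x y ∂Vol = 1)
    (X : ℝ → Ω → G)
    (hX_adapted : ∀ t : ℝ, 0 ≤ t → Measurable[ℱ t] (X t))
    (x₀ : G) (hX0 : ∀ᵐ ω ∂P, X 0 ω = x₀)
    (hMarkov : ∀ s t : ℝ, 0 ≤ s → s < t → ∀ f : G → ℝ, Measurable f →
      (∃ C, ∀ y, |f y| ≤ C) →
      P[(fun ω => f (X t ω)) | ℱ s] =ᵐ[P] fun ω => ∫ z, f z * p (t - s) (X s ω) z ∂Vol)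
    (T : ℝ) (hT : 0 < T)
    (ν : Measure G) [SigmaFinite ν]
    (f : G → ℝ) (hf_meas : Measurable f) (hf_nonneg : ∀ u, 0 ≤ f u)
    (hf_int : Integrable f ν) (hf_pos : 0 < ∫ u, f u ∂ν)
    -- `p` is everywhere positive :
    (hp_pos : ∀ t x y, 0 < t → 0 < p t x y)
    -- `D = ∫ f(u) p_T(x₀,u) dν(u) ∈ (0, ∞)` :
    (hD_int : Integrable (fun u => f u * p T x₀ u) ν)
    (hD_pos : 0 < ∫ u, f u * p T x₀ u ∂ν)
    (h_fin : ∀ t' : ℝ, 0 < t' → t' < T → ∀ x : G,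
      Integrable (fun u => f u * p (T - t') x u) ν)
    -- fixed times `0 ≤ s < t < T` :
    (s t : ℝ) (hs : 0 ≤ s) (hst : s < t) (htT : t < T)
    -- `ℚ` has density `Z_t` with respect to `ℙ` :
    (Q : Measure Ω)
    (hQ : Q = P.withDensity fun ω => ENNReal.ofReal
      ((∫ u, f u * p (T - t) (X t ω) u ∂ν) / (∫ u, f u * p T x₀ u ∂ν))) :
    -- `ℚ` is a probability measure :
    IsProbabilityMeasure Q ∧
    -- and the `ℚ`-conditional law of `X_t` given `ℱ_s` is a mixture of bridge laws :
    (∀ F : G → ℝ, Measurable F → (∃ C, ∀ x, |F x| ≤ C) →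
      Q[(fun ω => F (X t ω)) | ℱ s] =ᵐ[Q] fun ω =>
        ∫ u, (f u * p (T - s) (X s ω) u / ∫ u', f u' * p (T - s) (X s ω) u' ∂ν)
          * (∫ x, F x * p (t - s) (X s ω) x * p (T - t) x u
              / p (T - s) (X s ω) u ∂Vol) ∂ν) := by
  have ht0 : 0 < t := lt_of_le_of_lt hs hst
  have hts : 0 < t - s := sub_pos.2 hst
  have hTt : 0 < T - t := sub_pos.2 htT
  have hTs : 0 < T - s := by linarith
  have hsT : s < T := by linarith
  have hXt : Measurable (X t) := (hX_adapted t ht0.le).mono (ℱ.le t) le_rfl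
  have hXs : Measurable (X s) := (hX_adapted s hs).mono (ℱ.le s) le_rfl
  have hXsF : Measurable[ℱ s] (X s) := hX_adapted s hs
  have hpa : ∀ a : ℝ, Measurable fun q : G × G => p a q.1 q.2 :=
    fun a => hp_meas.comp (measurable_const.prodMk measurable_id)
  set D := ∫ u, f u * p T x₀ u ∂ν with hD_def
  set gt : G → ℝ := fun x => ∫ u, f u * p (T - t) x u ∂ν with hgt_def
  set gs : G → ℝ := fun y => ∫ u, f u * p (T - s) y u ∂ν with hgs_def
  set GE : ℝ → G → ℝ≥0∞ :=
    fun a x => ∫⁻ u, ENNReal.ofReal (f u) * ENNReal.ofReal (p a x u) ∂ν with hGE_def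
  have hgt_int : ∀ x, Integrable (fun u => f u * p (T - t) x u) ν := h_fin t ht0 htT
  have hgt_nonneg : ∀ x, 0 ≤ gt x :=
    fun x => integral_nonneg fun u => mul_nonneg (hf_nonneg u) (hp_nonneg _ _ _ hTt)
  have hgs_nonneg : ∀ y, 0 ≤ gs y :=
    fun y => integral_nonneg fun u => mul_nonneg (hf_nonneg u) (hp_nonneg _ _ _ hTs)
  have hgt_meas : Measurable gt := by
    have : StronglyMeasurable fun q : G × G => f q.2 * p (T - t) q.1 q.2 :=
      ((hf_meas.comp measurable_snd).mul (hpa (T - t))).stronglyMeasurable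
    exact this.integral_prod_right'.measurable
  have hgs_meas : Measurable gs := by
    have : StronglyMeasurable fun q : G × G => f q.2 * p (T - s) q.1 q.2 :=
      ((hf_meas.comp measurable_snd).mul (hpa (T - s))).stronglyMeasurable
    exact this.integral_prod_right'.measurable
  have hGE_meas : ∀ a : ℝ, Measurable (GE a) := by
    intro a
    exact Measurable.lintegral_prod_right'
      ((hf_meas.comp measurable_snd).ennreal_ofReal.mul (hpa a).ennreal_ofReal)
  have hofReal : ∀ a : ℝ, 0 < a → ∀ x : G, Integrable (fun u => f u * p a x u) ν →
      ENNReal.ofReal (∫ u, f u * p a x u ∂ν) = GE a x := by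
    intro a ha x hint
    rw [ofReal_integral_eq_lintegral_ofReal hint (Filter.Eventually.of_forall fun u =>
      mul_nonneg (hf_nonneg u) (hp_nonneg _ _ _ ha))]
    exact lintegral_congr fun u => ENNReal.ofReal_mul (hf_nonneg u)
  have hK2 : ∀ a b : ℝ, 0 < a → 0 < b → ∀ x : G,
      ∫⁻ z, GE b z * ENNReal.ofReal (p a x z) ∂Vol = GE (a + b) x :=
    fun a b ha hb x => aux_K2 hp_meas hp_nonneg hp_ck hp_pos hf_meas ha hb x
  have hck : ∀ a b : ℝ, 0 < a → 0 < b → ∀ x y : G,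
      Integrable (fun z => p a x z * p b z y) Vol ∧
      ∫⁻ z, ENNReal.ofReal (p a x z) * ENNReal.ofReal (p b z y) ∂Vol
        = ENNReal.ofReal (p (a + b) x y) :=
    fun a b ha hb x y => aux_ck hp_meas hp_nonneg hp_ck hp_pos ha hb x y
  have hGTx0 : GE T x₀ = ENNReal.ofReal D := (hofReal T hT x₀ hD_int).symm
  have hdivD : ∀ r : ℝ, 0 ≤ r →
      ENNReal.ofReal (r / D) = ENNReal.ofReal r * (ENNReal.ofReal D)⁻¹ := by
    intro r hr
    rw [div_eq_mul_inv, ENNReal.ofReal_mul hr, ENNReal.ofReal_inv_of_pos hD_pos]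
  have hDE0 : ENNReal.ofReal D ≠ 0 := (ENNReal.ofReal_pos.2 hD_pos).ne'
  have hinner_gt : ∀ y : G,
      ∫⁻ z, ENNReal.ofReal (gt z) * ENNReal.ofReal (p (t - s) y z) ∂Vol = GE (T - s) y := by
    intro y
    calc ∫⁻ z, ENNReal.ofReal (gt z) * ENNReal.ofReal (p (t - s) y z) ∂Vol
        = ∫⁻ z, GE (T - t) z * ENNReal.ofReal (p (t - s) y z) ∂Vol :=
          lintegral_congr fun z => by rw [hofReal (T - t) hTt z (hgt_int z)]
      _ = GE (t - s + (T - t)) y := hK2 (t - s) (T - t) hts hTt y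
      _ = GE (T - s) y := by norm_num
  have hmass : ∫⁻ ω, ENNReal.ofReal (gt (X t ω)) ∂P = ENNReal.ofReal D := by
    have hm := aux_markovL hp_meas hp_nonneg hp_norm hX_adapted hMarkov (le_refl 0) ht0
      (fun z => ENNReal.ofReal (gt z)) hgt_meas.ennreal_ofReal
      (A := Set.univ) MeasurableSet.univ
    rw [Measure.restrict_univ] at hm
    rw [hm]
    have hae : ∀ᵐ ω ∂P, ∫⁻ z, ENNReal.ofReal (gt z)
        * ENNReal.ofReal (p (t - 0) (X 0 ω) z) ∂Vol = ENNReal.ofReal D := by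
      filter_upwards [hX0] with ω hω
      rw [hω, sub_zero]
      calc ∫⁻ z, ENNReal.ofReal (gt z) * ENNReal.ofReal (p t x₀ z) ∂Vol
          = ∫⁻ z, GE (T - t) z * ENNReal.ofReal (p t x₀ z) ∂Vol :=
            lintegral_congr fun z => by rw [hofReal (T - t) hTt z (hgt_int z)]
        _ = GE (t + (T - t)) x₀ := hK2 t (T - t) ht0 hTt x₀
        _ = ENNReal.ofReal D := by rw [show t + (T - t) = T by ring, hGTx0]
    rw [lintegral_congr_ae hae, lintegral_const, measure_univ, mul_one]
  have hZlint : ∫⁻ ω, ENNReal.ofReal (gt (X t ω) / D) ∂P = 1 := by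
    have h1 : ∀ ω : Ω, ENNReal.ofReal (gt (X t ω) / D)
        = ENNReal.ofReal (gt (X t ω)) * (ENNReal.ofReal D)⁻¹ :=
      fun ω => hdivD _ (hgt_nonneg _)
    rw [lintegral_congr h1, lintegral_mul_const' _ _ (ENNReal.inv_ne_top.2 hDE0), hmass,
      ENNReal.mul_inv_cancel hDE0 ENNReal.ofReal_ne_top]
  have hQprob : IsProbabilityMeasure Q := by
    constructor
    rw [hQ, withDensity_apply _ MeasurableSet.univ, Measure.restrict_univ, hZlint]
  have hZmeas : Measurable fun ω => gt (X t ω) / D := (hgt_meas.comp hXt).div_const D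
  have hZnn : ∀ ω, 0 ≤ gt (X t ω) / D := fun ω => div_nonneg (hgt_nonneg _) hD_pos.le
  have hZint : Integrable (fun ω => gt (X t ω) / D) P :=
    ⟨hZmeas.aestronglyMeasurable, (hasFiniteIntegral_iff_ofReal
      (Filter.Eventually.of_forall hZnn)).2 (by rw [hZlint]; exact ENNReal.one_lt_top)⟩
  have hgs_int_ae : ∀ᵐ ω ∂P, Integrable (fun u => f u * p (T - s) (X s ω) u) ν := by
    rcases eq_or_lt_of_le hs with hs0 | hs0
    · have hs0' : s = 0 := hs0.symm
      subst hs0'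
      rw [sub_zero]
      filter_upwards [hX0] with ω hω
      rw [hω]; exact hD_int
    · exact Filter.Eventually.of_forall fun ω => h_fin s hs0 hsT _
  have hgsX_ae : ∀ᵐ ω ∂P, ENNReal.ofReal (gs (X s ω)) = GE (T - s) (X s ω) :=
    hgs_int_ae.mono fun ω h => hofReal (T - s) hTs _ h
  have hgsXGE_lint : ∫⁻ ω, GE (T - s) (X s ω) ∂P = ENNReal.ofReal D := by
    rcases eq_or_lt_of_le hs with hs0 | hs0
    · have hs0' : s = 0 := hs0.symm
      subst hs0'
      have : ∀ᵐ ω ∂P, GE (T - 0) (X 0 ω) = ENNReal.ofReal D := by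
        filter_upwards [hX0] with ω hω
        rw [hω, sub_zero, hGTx0]
      rw [lintegral_congr_ae this, lintegral_const, measure_univ, mul_one]
    · have hm := aux_markovL hp_meas hp_nonneg hp_norm hX_adapted hMarkov (le_refl 0) hs0
        (GE (T - s)) (hGE_meas _) (A := Set.univ) MeasurableSet.univ
      rw [Measure.restrict_univ] at hm
      rw [hm]
      have hae : ∀ᵐ ω ∂P, ∫⁻ z, GE (T - s) z
          * ENNReal.ofReal (p (s - 0) (X 0 ω) z) ∂Vol = ENNReal.ofReal D := by
        filter_upwards [hX0] with ω hω
        rw [hω, sub_zero]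
        calc ∫⁻ z, GE (T - s) z * ENNReal.ofReal (p s x₀ z) ∂Vol
            = GE (s + (T - s)) x₀ := hK2 s (T - s) hs0 hTs x₀
          _ = ENNReal.ofReal D := by rw [show s + (T - s) = T by ring, hGTx0]
      rw [lintegral_congr_ae hae, lintegral_const, measure_univ, mul_one]
  have hgsX_lint : ∫⁻ ω, ENNReal.ofReal (gs (X s ω)) ∂P = ENNReal.ofReal D := by
    rw [lintegral_congr_ae hgsX_ae, hgsXGE_lint]
  have hgsX_int : Integrable (fun ω => gs (X s ω)) P :=
    ⟨(hgs_meas.comp hXs).aestronglyMeasurable, (hasFiniteIntegral_iff_ofReal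
      (Filter.Eventually.of_forall fun ω => hgs_nonneg _)).2
      (by rw [hgsX_lint]; exact ENNReal.ofReal_lt_top)⟩
  have hGEX_fin : ∀ᵐ ω ∂P, GE (T - s) (X s ω) ≠ ⊤ := by
    filter_upwards [hgsX_ae] with ω hω
    rw [← hω]; exact ENNReal.ofReal_ne_top
  haveI : SigmaFinite (P.trim (ℱ.le s)) := inferInstance
  have hsetZ : ∀ A : Set Ω, MeasurableSet[ℱ s] A →
      ∫ ω in A, gs (X s ω) / D ∂P = ∫ ω in A, gt (X t ω) / D ∂P := by
    intro A hA
    have hmk := aux_markovL hp_meas hp_nonneg hp_norm hX_adapted hMarkov hs hst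
      (fun z => ENNReal.ofReal (gt z / D)) ((hgt_meas.div_const D).ennreal_ofReal) hA
    have hLlint : ∫⁻ ω in A, ENNReal.ofReal (gt (X t ω) / D) ∂P
        = ∫⁻ ω in A, ENNReal.ofReal (gs (X s ω) / D) ∂P := by
      rw [hmk]
      refine lintegral_congr_ae (ae_restrict_of_ae ?_)
      filter_upwards [hgsX_ae] with ω hω
      calc ∫⁻ z, ENNReal.ofReal (gt z / D) * ENNReal.ofReal (p (t - s) (X s ω) z) ∂Vol
          = ∫⁻ z, ENNReal.ofReal (gt z) * ENNReal.ofReal (p (t - s) (X s ω) z)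
              * (ENNReal.ofReal D)⁻¹ ∂Vol := by
            refine lintegral_congr fun z => ?_
            rw [hdivD _ (hgt_nonneg z)]; ring
        _ = GE (T - s) (X s ω) * (ENNReal.ofReal D)⁻¹ := by
            rw [lintegral_mul_const' _ _ (ENNReal.inv_ne_top.2 hDE0), hinner_gt]
        _ = ENNReal.ofReal (gs (X s ω) / D) := by
            rw [hdivD _ (hgs_nonneg _), hω]
    have e1 : ∫ ω in A, gt (X t ω) / D ∂P
        = (∫⁻ ω in A, ENNReal.ofReal (gt (X t ω) / D) ∂P).toReal :=
      integral_eq_lintegral_of_nonneg_ae (Filter.Eventually.of_forall hZnn)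
        hZmeas.aestronglyMeasurable.restrict
    have e2 : ∫ ω in A, gs (X s ω) / D ∂P
        = (∫⁻ ω in A, ENNReal.ofReal (gs (X s ω) / D) ∂P).toReal :=
      integral_eq_lintegral_of_nonneg_ae (Filter.Eventually.of_forall fun ω =>
        div_nonneg (hgs_nonneg _) hD_pos.le)
        ((hgs_meas.comp hXs).div_const D).aestronglyMeasurable.restrict
    rw [e1, e2, hLlint]
  have hcondZ : P[fun ω => gt (X t ω) / D | ℱ s] =ᵐ[P] fun ω => gs (X s ω) / D := by
    refine (ae_eq_condExp_of_forall_setIntegral_eq (ℱ.le s) hZint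
      (fun A hA _ => (hgsX_int.div_const D).integrableOn) (fun A hA _ => hsetZ A hA) ?_).symm
    exact StronglyMeasurable.aestronglyMeasurable
      ((hgs_meas.comp hXsF).div_const D).stronglyMeasurable
  have hgs_pos : ∀ y : G, Integrable (fun u => f u * p (T - s) y u) ν → 0 < gs y := by
    intro y hy
    rcases lt_or_eq_of_le (hgs_nonneg y) with h | h
    · exact h
    · exfalso
      have h0 : ∫ u, f u * p (T - s) y u ∂ν = 0 := by rw [hgs_def] at h; exact h.symm
      have hz := (integral_eq_zero_iff_of_nonneg
        (fun u => mul_nonneg (hf_nonneg u) (hp_nonneg _ _ _ hTs)) hy).1 h0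
      have hf0 : f =ᵐ[ν] 0 := by
        filter_upwards [hz] with u hu
        rcases mul_eq_zero.1 hu with h' | h'
        · exact h'
        · exact absurd h' (hp_pos _ _ _ hTs).ne'
      have h00 : ∫ u, f u ∂ν = 0 := by rw [integral_congr_ae hf0]; simp
      rw [h00] at hf_pos
      exact lt_irrefl 0 hf_pos
  have hpp_int : ∀ y u : G, Integrable (fun x => p (t - s) y x * p (T - t) x u) Vol :=
    fun y u => (hck (t - s) (T - t) hts hTt y u).1
  have hpp_real : ∀ y u : G, ∫ x, p (t - s) y x * p (T - t) x u ∂Vol = p (T - s) y u := by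
    intro y u
    have h := hp_ck (T - t) (t - s) hTt hts y u
    rw [show t - s + (T - t) = T - s by ring] at h
    exact h.symm
  have hgtp : ∀ y : G, Integrable (fun u => f u * p (T - s) y u) ν →
      Integrable (fun z => gt z * p (t - s) y z) Vol ∧
        ∫ z, gt z * p (t - s) y z ∂Vol = gs y := by
    intro y hy
    have hGEne : GE (T - s) y ≠ ⊤ := by
      rw [← hofReal (T - s) hTs y hy]; exact ENNReal.ofReal_ne_top
    have hmeasz : Measurable fun z => gt z * p (t - s) y z :=
      hgt_meas.mul ((hpa (t - s)).comp (measurable_const.prodMk measurable_id))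
    have hnnz : ∀ z, 0 ≤ gt z * p (t - s) y z :=
      fun z => mul_nonneg (hgt_nonneg z) (hp_nonneg _ _ _ hts)
    have hlz : ∫⁻ z, ENNReal.ofReal (gt z * p (t - s) y z) ∂Vol = GE (T - s) y := by
      rw [← hinner_gt y]
      exact lintegral_congr fun z => ENNReal.ofReal_mul (hgt_nonneg z)
    have hint : Integrable (fun z => gt z * p (t - s) y z) Vol :=
      ⟨hmeasz.aestronglyMeasurable, (hasFiniteIntegral_iff_ofReal
        (Filter.Eventually.of_forall hnnz)).2 (by rw [hlz]; exact hGEne.lt_top)⟩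
    refine ⟨hint, ?_⟩
    rw [integral_eq_lintegral_of_nonneg_ae (Filter.Eventually.of_forall hnnz)
      hmeasz.aestronglyMeasurable, hlz, ← hofReal (T - s) hTs y hy,
      ENNReal.toReal_ofReal (hgs_nonneg y), hgs_def]
  refine ⟨hQprob, ?_⟩
  intro F hF_meas hFbdd
  obtain ⟨C₀, hC₀⟩ := hFbdd
  set C := max C₀ 0 with hC_def
  have hC : ∀ x, |F x| ≤ C := fun x => (hC₀ x).trans (le_max_left _ _)
  have hC0 : 0 ≤ C := le_max_right _ _
  have hE_meas : ∀ (F' : G → ℝ), Measurable F' → ∀ y u : G,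
      Measurable fun x => F' x * p (t - s) y x * p (T - t) x u := by
    intro F' hm y u
    exact (hm.mul ((hpa (t - s)).comp (measurable_const.prodMk measurable_id))).mul
      ((hpa (T - t)).comp (measurable_id.prodMk measurable_const))
  have hJ'_int : ∀ (F' : G → ℝ), Measurable F' → (∀ x, |F' x| ≤ C) → ∀ y u : G,
      Integrable (fun x => F' x * p (t - s) y x * p (T - t) x u) Vol := by
    intro F' hm hb y u
    refine Integrable.mono' ((hpp_int y u).const_mul C)
      (hE_meas F' hm y u).aestronglyMeasurable (Filter.Eventually.of_forall fun x => ?_)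
    rw [Real.norm_eq_abs, abs_mul, abs_mul, abs_of_nonneg (hp_nonneg _ _ _ hts),
      abs_of_nonneg (hp_nonneg _ _ _ hTt)]
    calc |F' x| * p (t - s) y x * p (T - t) x u
        ≤ C * p (t - s) y x * p (T - t) x u :=
          mul_le_mul_of_nonneg_right
            (mul_le_mul_of_nonneg_right (hb x) (hp_nonneg _ _ _ hts)) (hp_nonneg _ _ _ hTt)
      _ = C * (p (t - s) y x * p (T - t) x u) := by ring
  have habs_le : ∀ (F' : G → ℝ), Measurable F' → (∀ x, |F' x| ≤ C) → ∀ y u : G,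
      ∫ x, |F' x * p (t - s) y x * p (T - t) x u| ∂Vol ≤ C * p (T - s) y u := by
    intro F' hm hb y u
    calc ∫ x, |F' x * p (t - s) y x * p (T - t) x u| ∂Vol
        ≤ ∫ x, C * (p (t - s) y x * p (T - t) x u) ∂Vol := by
          refine integral_mono (hJ'_int F' hm hb y u).abs ((hpp_int y u).const_mul C) fun x => ?_
          rw [abs_mul, abs_mul, abs_of_nonneg (hp_nonneg _ _ _ hts),
            abs_of_nonneg (hp_nonneg _ _ _ hTt)]
          calc |F' x| * p (t - s) y x * p (T - t) x u
              ≤ C * p (t - s) y x * p (T - t) x u :=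
                mul_le_mul_of_nonneg_right
                  (mul_le_mul_of_nonneg_right (hb x) (hp_nonneg _ _ _ hts))
                  (hp_nonneg _ _ _ hTt)
            _ = C * (p (t - s) y x * p (T - t) x u) := by ring
      _ = C * p (T - s) y u := by rw [integral_const_mul, hpp_real]
  have hJ'_bound : ∀ (F' : G → ℝ), Measurable F' → (∀ x, |F' x| ≤ C) → ∀ y u : G,
      |∫ x, F' x * p (t - s) y x * p (T - t) x u ∂Vol| ≤ C * p (T - s) y u := by
    intro F' hm hb y u
    calc |∫ x, F' x * p (t - s) y x * p (T - t) x u ∂Vol|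
        ≤ ∫ x, |F' x * p (t - s) y x * p (T - t) x u| ∂Vol := by
          simpa [Real.norm_eq_abs, abs_mul] using norm_integral_le_integral_norm
            (fun x => F' x * p (t - s) y x * p (T - t) x u) (μ := Vol)
      _ ≤ C * p (T - s) y u := habs_le F' hm hb y u
  have hFub : ∀ (F' : G → ℝ), Measurable F' → (∀ x, |F' x| ≤ C) → ∀ y : G,
      Integrable (fun u => f u * p (T - s) y u) ν →
      ∫ u, f u * (∫ x, F' x * p (t - s) y x * p (T - t) x u ∂Vol) ∂ν
        = ∫ x, F' x * p (t - s) y x * gt x ∂Vol := by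
    intro F' hm hb y hy
    have hu_meas : Measurable (Function.uncurry fun u x =>
        f u * (F' x * p (t - s) y x * p (T - t) x u)) := by
      refine (hf_meas.comp measurable_fst).mul ?_
      exact ((hm.comp measurable_snd).mul
        ((hpa (t - s)).comp (measurable_const.prodMk measurable_snd))).mul
        ((hpa (T - t)).comp (measurable_snd.prodMk measurable_fst))
    have hint : Integrable (Function.uncurry fun u x =>
        f u * (F' x * p (t - s) y x * p (T - t) x u)) (ν.prod Vol) := by
      refine (integrable_prod_iff hu_meas.aestronglyMeasurable).2 ⟨?_, ?_⟩
      · exact Filter.Eventually.of_forall fun u => (hJ'_int F' hm hb y u).const_mul (f u)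
      · simp only [Function.uncurry_apply_pair]
        have hsm : AEStronglyMeasurable (fun u =>
            ∫ x, ‖f u * (F' x * p (t - s) y x * p (T - t) x u)‖ ∂Vol) ν :=
          hu_meas.norm.stronglyMeasurable.integral_prod_right'.aestronglyMeasurable
        refine Integrable.mono' (hy.const_mul C) hsm (Filter.Eventually.of_forall fun u => ?_)
        rw [Real.norm_eq_abs, abs_of_nonneg (integral_nonneg fun x => norm_nonneg _)]
        have h1 : ∫ x, ‖f u * (F' x * p (t - s) y x * p (T - t) x u)‖ ∂Vol
            = |f u| * ∫ x, |F' x| * |p (t - s) y x| * |p (T - t) x u| ∂Vol := by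
          rw [← integral_const_mul]
          refine integral_congr_ae (Filter.Eventually.of_forall fun x => ?_)
          simp only [norm_mul, Real.norm_eq_abs, abs_mul]
        rw [h1, abs_of_nonneg (hf_nonneg u)]
        have h2 : ∫ x, |F' x| * |p (t - s) y x| * |p (T - t) x u| ∂Vol
            = ∫ x, |F' x * p (t - s) y x * p (T - t) x u| ∂Vol := by
          refine integral_congr_ae (Filter.Eventually.of_forall fun x => ?_)
          simp [abs_mul]
        rw [h2]
        calc f u * ∫ x, |F' x * p (t - s) y x * p (T - t) x u| ∂Vol
            ≤ f u * (C * p (T - s) y u) :=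
              mul_le_mul_of_nonneg_left (habs_le F' hm hb y u) (hf_nonneg u)
          _ = C * (f u * p (T - s) y u) := by ring
    have hsw := integral_integral_swap hint
    calc ∫ u, f u * (∫ x, F' x * p (t - s) y x * p (T - t) x u ∂Vol) ∂ν
        = ∫ u, ∫ x, f u * (F' x * p (t - s) y x * p (T - t) x u) ∂Vol ∂ν := by
          refine integral_congr_ae (Filter.Eventually.of_forall fun u => ?_)
          exact (integral_const_mul _ _).symm
      _ = ∫ x, ∫ u, f u * (F' x * p (t - s) y x * p (T - t) x u) ∂ν ∂Vol := hsw
      _ = ∫ x, F' x * p (t - s) y x * gt x ∂Vol := by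
          refine integral_congr_ae (Filter.Eventually.of_forall fun x => ?_)
          calc ∫ u, f u * (F' x * p (t - s) y x * p (T - t) x u) ∂ν
              = ∫ u, (F' x * p (t - s) y x) * (f u * p (T - t) x u) ∂ν := by
                refine integral_congr_ae (Filter.Eventually.of_forall fun u => ?_); ring
            _ = F' x * p (t - s) y x * gt x := by
                rw [integral_const_mul]
  set K : G → ℝ := fun y => ∫ u, (f u * p (T - s) y u / gs y)
      * (∫ x, F x * p (t - s) y x * p (T - t) x u / p (T - s) y u ∂Vol) ∂ν with hK_def
  have hJy_meas : Measurable fun q : G × G =>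
      ∫ x, F x * p (t - s) q.1 x * p (T - t) x q.2 ∂Vol := by
    have : StronglyMeasurable fun r : (G × G) × G =>
        F r.2 * p (t - s) r.1.1 r.2 * p (T - t) r.2 r.1.2 :=
      (((hF_meas.comp measurable_snd).mul
        ((hpa (t - s)).comp ((measurable_fst.comp measurable_fst).prodMk measurable_snd))).mul
        ((hpa (T - t)).comp (measurable_snd.prodMk
          (measurable_snd.comp measurable_fst)))).stronglyMeasurable
    exact this.integral_prod_right'.measurable
  have hInner_meas : Measurable fun q : G × G =>
      ∫ x, F x * p (t - s) q.1 x * p (T - t) x q.2 / p (T - s) q.1 q.2 ∂Vol := by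
    have : StronglyMeasurable fun r : (G × G) × G =>
        F r.2 * p (t - s) r.1.1 r.2 * p (T - t) r.2 r.1.2 / p (T - s) r.1.1 r.1.2 :=
      ((((hF_meas.comp measurable_snd).mul
        ((hpa (t - s)).comp ((measurable_fst.comp measurable_fst).prodMk measurable_snd))).mul
        ((hpa (T - t)).comp (measurable_snd.prodMk (measurable_snd.comp measurable_fst)))).div
        ((hpa (T - s)).comp ((measurable_fst.comp measurable_fst).prodMk
          (measurable_snd.comp measurable_fst)))).stronglyMeasurable
    exact this.integral_prod_right'.measurable
  have hK_meas : Measurable K := by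
    rw [hK_def]
    have : StronglyMeasurable fun q : G × G =>
        (f q.2 * p (T - s) q.1 q.2 / gs q.1)
          * (∫ x, F x * p (t - s) q.1 x * p (T - t) x q.2 / p (T - s) q.1 q.2 ∂Vol) :=
      ((((hf_meas.comp measurable_snd).mul (hpa (T - s))).div
        (hgs_meas.comp measurable_fst)).mul hInner_meas).stronglyMeasurable
    exact this.integral_prod_right'.measurable
  have hKform : ∀ y : G, Integrable (fun u => f u * p (T - s) y u) ν →
      K y = (∫ u, f u * (∫ x, F x * p (t - s) y x * p (T - t) x u ∂Vol) ∂ν) / gs y := by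
    intro y hy
    have hgsy := hgs_pos y hy
    have hpt : ∀ u : G, (f u * p (T - s) y u / gs y)
        * (∫ x, F x * p (t - s) y x * p (T - t) x u / p (T - s) y u ∂Vol)
        = f u * (∫ x, F x * p (t - s) y x * p (T - t) x u ∂Vol) / gs y := by
      intro u
      have hpp0 : p (T - s) y u ≠ 0 := (hp_pos _ _ _ hTs).ne'
      have hgs0 : gs y ≠ 0 := hgsy.ne'
      rw [integral_div]
      field_simp
    have step1 : K y = ∫ u, f u * (∫ x, F x * p (t - s) y x * p (T - t) x u ∂Vol) / gs y ∂ν :=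
      integral_congr_ae (Filter.Eventually.of_forall hpt)
    rw [step1, integral_div]
  have hfJ_int : ∀ y : G, Integrable (fun u => f u * p (T - s) y u) ν →
      Integrable (fun u => f u
        * (∫ x, F x * p (t - s) y x * p (T - t) x u ∂Vol)) ν := by
    intro y hy
    refine Integrable.mono' (hy.const_mul C)
      (hf_meas.mul (hJy_meas.comp (measurable_const.prodMk measurable_id))).aestronglyMeasurable
      (Filter.Eventually.of_forall fun u => ?_)
    rw [Real.norm_eq_abs, abs_mul, abs_of_nonneg (hf_nonneg u)]
    calc f u * |∫ x, F x * p (t - s) y x * p (T - t) x u ∂Vol|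
        ≤ f u * (C * p (T - s) y u) :=
          mul_le_mul_of_nonneg_left (hJ'_bound F hF_meas hC y u) (hf_nonneg u)
      _ = C * (f u * p (T - s) y u) := by ring
  have hK_eq : ∀ y : G, Integrable (fun u => f u * p (T - s) y u) ν →
      K y = (∫ x, F x * p (t - s) y x * gt x ∂Vol) / gs y := by
    intro y hy
    rw [hKform y hy, hFub F hF_meas hC y hy]
  have hK_bound : ∀ y : G, Integrable (fun u => f u * p (T - s) y u) ν → |K y| ≤ C := by
    intro y hy
    have hgsy := hgs_pos y hy
    rw [hKform y hy, abs_div, abs_of_nonneg (hgs_nonneg y), div_le_iff₀ hgsy]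
    calc |∫ u, f u * (∫ x, F x * p (t - s) y x * p (T - t) x u ∂Vol) ∂ν|
        ≤ ∫ u, |f u * (∫ x, F x * p (t - s) y x * p (T - t) x u ∂Vol)| ∂ν := by
          simpa [Real.norm_eq_abs, abs_mul] using norm_integral_le_integral_norm
            (fun u => f u * (∫ x, F x * p (t - s) y x * p (T - t) x u ∂Vol)) (μ := ν)
      _ ≤ ∫ u, C * (f u * p (T - s) y u) ∂ν := by
          refine integral_mono (hfJ_int y hy).abs (hy.const_mul C) fun u => ?_
          rw [abs_mul, abs_of_nonneg (hf_nonneg u)]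
          calc f u * |∫ x, F x * p (t - s) y x * p (T - t) x u ∂Vol|
              ≤ f u * (C * p (T - s) y u) :=
                mul_le_mul_of_nonneg_left (hJ'_bound F hF_meas hC y u) (hf_nonneg u)
            _ = C * (f u * p (T - s) y u) := by ring
      _ = C * gs y := by rw [integral_const_mul]
  have hFtZ_int : ∀ (F' : G → ℝ), Measurable F' → (∀ x, |F' x| ≤ C) →
      Integrable (fun ω => F' (X t ω) * (gt (X t ω) / D)) P := by
    intro F' hm hb
    refine Integrable.mono' (hZint.const_mul C)
      ((hm.comp hXt).mul hZmeas).aestronglyMeasurable (Filter.Eventually.of_forall fun ω => ?_)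
    rw [Real.norm_eq_abs, abs_mul, abs_of_nonneg (hZnn ω)]
    exact mul_le_mul_of_nonneg_right (hb _) (hZnn ω)
  have hW_meas : ∀ (F' : G → ℝ), Measurable F' →
      Measurable fun y : G => ∫ z, F' z * gt z * p (t - s) y z ∂Vol := by
    intro F' hm
    have : StronglyMeasurable fun q : G × G => F' q.2 * gt q.2 * p (t - s) q.1 q.2 :=
      (((hm.comp measurable_snd).mul (hgt_meas.comp measurable_snd)).mul
        (hpa (t - s))).stronglyMeasurable
    exact this.integral_prod_right'.measurable
  have hWz : ∀ (F' : G → ℝ), Measurable F' → (∀ x, |F' x| ≤ C) → ∀ y : G,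
      Integrable (fun u => f u * p (T - s) y u) ν →
      Integrable (fun z => F' z * gt z * p (t - s) y z) Vol ∧
        |∫ z, F' z * gt z * p (t - s) y z ∂Vol| ≤ C * gs y := by
    intro F' hm hb y hy
    obtain ⟨hgtp_int, hgtp_eq⟩ := hgtp y hy
    have hmeasz : Measurable fun z => F' z * gt z * p (t - s) y z :=
      (hm.mul hgt_meas).mul ((hpa (t - s)).comp (measurable_const.prodMk measurable_id))
    have hptw : ∀ z, |F' z * gt z * p (t - s) y z| ≤ C * (gt z * p (t - s) y z) := by
      intro z
      rw [abs_mul, abs_mul, abs_of_nonneg (hgt_nonneg z), abs_of_nonneg (hp_nonneg _ _ _ hts)]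
      calc |F' z| * gt z * p (t - s) y z ≤ C * gt z * p (t - s) y z :=
            mul_le_mul_of_nonneg_right
              (mul_le_mul_of_nonneg_right (hb z) (hgt_nonneg z)) (hp_nonneg _ _ _ hts)
        _ = C * (gt z * p (t - s) y z) := by ring
    have hzint : Integrable (fun z => F' z * gt z * p (t - s) y z) Vol := by
      refine Integrable.mono' (hgtp_int.const_mul C) hmeasz.aestronglyMeasurable
        (Filter.Eventually.of_forall fun z => ?_)
      rw [Real.norm_eq_abs]; exact hptw z
    refine ⟨hzint, ?_⟩
    calc |∫ z, F' z * gt z * p (t - s) y z ∂Vol|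
        ≤ ∫ z, |F' z * gt z * p (t - s) y z| ∂Vol := by
          simpa [Real.norm_eq_abs, abs_mul] using norm_integral_le_integral_norm
            (fun z => F' z * gt z * p (t - s) y z) (μ := Vol)
      _ ≤ ∫ z, C * (gt z * p (t - s) y z) ∂Vol :=
          integral_mono hzint.abs (hgtp_int.const_mul C) hptw
      _ = C * gs y := by rw [integral_const_mul, hgtp_eq]
  have hWX_int : ∀ (F' : G → ℝ), Measurable F' → (∀ x, |F' x| ≤ C) →
      Integrable (fun ω => (∫ z, F' z * gt z * p (t - s) (X s ω) z ∂Vol) / D) P := by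
    intro F' hm hb
    refine Integrable.mono' ((hgsX_int.const_mul C).div_const D)
      (((hW_meas F' hm).comp hXs).div_const D).aestronglyMeasurable ?_
    filter_upwards [hgs_int_ae] with ω hω
    rw [Real.norm_eq_abs, abs_div, abs_of_nonneg hD_pos.le]
    exact (div_le_div_iff_of_pos_right hD_pos).2 ((hWz F' hm hb _ hω).2)
  have claim : ∀ (F' : G → ℝ), Measurable F' → (∀ x, 0 ≤ F' x) → (∀ x, |F' x| ≤ C) →
      ∀ A : Set Ω, MeasurableSet[ℱ s] A →
      ∫ ω in A, F' (X t ω) * (gt (X t ω) / D) ∂P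
        = ∫ ω in A, (∫ z, F' z * gt z * p (t - s) (X s ω) z ∂Vol) / D ∂P := by
    intro F' hm hnn hb A hA
    have hW_nonneg : ∀ y, 0 ≤ ∫ z, F' z * gt z * p (t - s) y z ∂Vol := fun y =>
      integral_nonneg fun z =>
        mul_nonneg (mul_nonneg (hnn z) (hgt_nonneg z)) (hp_nonneg _ _ _ hts)
    have hlin : ∀ y : G, Integrable (fun u => f u * p (T - s) y u) ν →
        ∫⁻ z, ENNReal.ofReal (F' z * (gt z / D)) * ENNReal.ofReal (p (t - s) y z) ∂Vol
          = ENNReal.ofReal ((∫ z, F' z * gt z * p (t - s) y z ∂Vol) / D) := by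
      intro y hy
      have hzint := (hWz F' hm hb y hy).1
      have hz_nonneg : ∀ z, 0 ≤ F' z * gt z * p (t - s) y z := fun z =>
        mul_nonneg (mul_nonneg (hnn z) (hgt_nonneg z)) (hp_nonneg _ _ _ hts)
      calc ∫⁻ z, ENNReal.ofReal (F' z * (gt z / D)) * ENNReal.ofReal (p (t - s) y z) ∂Vol
          = ∫⁻ z, ENNReal.ofReal (F' z * gt z * p (t - s) y z) * (ENNReal.ofReal D)⁻¹ ∂Vol := by
            refine lintegral_congr fun z => ?_
            rw [← ENNReal.ofReal_mul
              (mul_nonneg (hnn z) (div_nonneg (hgt_nonneg z) hD_pos.le)),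
              show F' z * (gt z / D) * p (t - s) y z
                = (F' z * gt z * p (t - s) y z) / D by ring,
              hdivD _ (hz_nonneg z)]
        _ = (∫⁻ z, ENNReal.ofReal (F' z * gt z * p (t - s) y z) ∂Vol)
              * (ENNReal.ofReal D)⁻¹ :=
            lintegral_mul_const' _ _ (ENNReal.inv_ne_top.2 hDE0)
        _ = ENNReal.ofReal ((∫ z, F' z * gt z * p (t - s) y z ∂Vol) / D) := by
            rw [← ofReal_integral_eq_lintegral_ofReal hzint
              (Filter.Eventually.of_forall hz_nonneg),
              ← hdivD _ (integral_nonneg hz_nonneg)]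
    have hφmeas : Measurable fun z => ENNReal.ofReal (F' z * (gt z / D)) :=
      (hm.mul (hgt_meas.div_const D)).ennreal_ofReal
    have hmk := aux_markovL hp_meas hp_nonneg hp_norm hX_adapted hMarkov hs hst
      (fun z => ENNReal.ofReal (F' z * (gt z / D))) hφmeas hA
    have e1 : ∫ ω in A, F' (X t ω) * (gt (X t ω) / D) ∂P
        = (∫⁻ ω in A, ENNReal.ofReal (F' (X t ω) * (gt (X t ω) / D)) ∂P).toReal :=
      integral_eq_lintegral_of_nonneg_ae (Filter.Eventually.of_forall fun ω =>
        mul_nonneg (hnn _) (hZnn ω))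
        ((hm.comp hXt).mul hZmeas).aestronglyMeasurable.restrict
    have e2 : ∫ ω in A, (∫ z, F' z * gt z * p (t - s) (X s ω) z ∂Vol) / D ∂P
        = (∫⁻ ω in A, ENNReal.ofReal
            ((∫ z, F' z * gt z * p (t - s) (X s ω) z ∂Vol) / D) ∂P).toReal :=
      integral_eq_lintegral_of_nonneg_ae (Filter.Eventually.of_forall fun ω =>
        div_nonneg (hW_nonneg _) hD_pos.le)
        (((hW_meas F' hm).comp hXs).div_const D).aestronglyMeasurable.restrict
    rw [e1, e2, hmk]
    congr 1
    refine lintegral_congr_ae (ae_restrict_of_ae ?_)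
    filter_upwards [hgs_int_ae] with ω hω
    exact hlin _ hω
  set Fp : G → ℝ := fun x => max (F x) 0 with hFp_def
  set Fm : G → ℝ := fun x => max (-F x) 0 with hFm_def
  have hFp_meas : Measurable Fp := hF_meas.max measurable_const
  have hFm_meas : Measurable Fm := hF_meas.neg.max measurable_const
  have hFp_nn : ∀ x, 0 ≤ Fp x := fun x => le_max_right _ _
  have hFm_nn : ∀ x, 0 ≤ Fm x := fun x => le_max_right _ _
  have hFp_b : ∀ x, |Fp x| ≤ C := by
    intro x
    rw [abs_of_nonneg (hFp_nn x)]
    exact max_le (abs_le.1 (hC x)).2 hC0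
  have hFm_b : ∀ x, |Fm x| ≤ C := by
    intro x
    rw [abs_of_nonneg (hFm_nn x)]
    refine max_le (by linarith [(abs_le.1 (hC x)).1]) hC0
  have hFdecomp : ∀ x, Fp x - Fm x = F x := fun x => max_zero_sub_max_neg_zero_eq_self (F x)
  have hsetF : ∀ A : Set Ω, MeasurableSet[ℱ s] A →
      ∫ ω in A, F (X t ω) * (gt (X t ω) / D) ∂P
        = ∫ ω in A, (∫ z, F z * gt z * p (t - s) (X s ω) z ∂Vol) / D ∂P := by
    intro A hA
    have l1 : ∫ ω in A, F (X t ω) * (gt (X t ω) / D) ∂P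
        = (∫ ω in A, Fp (X t ω) * (gt (X t ω) / D) ∂P)
          - ∫ ω in A, Fm (X t ω) * (gt (X t ω) / D) ∂P := by
      rw [← integral_sub (hFtZ_int Fp hFp_meas hFp_b).integrableOn
        (hFtZ_int Fm hFm_meas hFm_b).integrableOn]
      refine integral_congr_ae (Filter.Eventually.of_forall fun ω => ?_)
      simp only [← hFdecomp (X t ω)]
      ring
    have l2 : ∫ ω in A, (∫ z, F z * gt z * p (t - s) (X s ω) z ∂Vol) / D ∂P
        = (∫ ω in A, (∫ z, Fp z * gt z * p (t - s) (X s ω) z ∂Vol) / D ∂P)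
          - ∫ ω in A, (∫ z, Fm z * gt z * p (t - s) (X s ω) z ∂Vol) / D ∂P := by
      rw [← integral_sub (hWX_int Fp hFp_meas hFp_b).integrableOn
        (hWX_int Fm hFm_meas hFm_b).integrableOn]
      refine integral_congr_ae (ae_restrict_of_ae ?_)
      filter_upwards [hgs_int_ae] with ω hω
      have hsub : ∫ z, F z * gt z * p (t - s) (X s ω) z ∂Vol
          = (∫ z, Fp z * gt z * p (t - s) (X s ω) z ∂Vol)
            - ∫ z, Fm z * gt z * p (t - s) (X s ω) z ∂Vol := by
        rw [← integral_sub (hWz Fp hFp_meas hFp_b _ hω).1 (hWz Fm hFm_meas hFm_b _ hω).1]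
        refine integral_congr_ae (Filter.Eventually.of_forall fun z => ?_)
        simp only [← hFdecomp z]
        ring
      rw [hsub, sub_div]
    rw [l1, l2, claim Fp hFp_meas hFp_nn hFp_b A hA, claim Fm hFm_meas hFm_nn hFm_b A hA]
  -- move to Q
  have hQac : Q ≪ P := by
    rw [hQ]; exact withDensity_absolutelyContinuous P _
  have hgs_int_aeQ : ∀ᵐ ω ∂Q, Integrable (fun u => f u * p (T - s) (X s ω) u) ν :=
    hgs_int_ae.filter_mono hQac.ae_le
  haveI : SigmaFinite (Q.trim (ℱ.le s)) := inferInstance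
  have hFQ_int : Integrable (fun ω => F (X t ω)) Q := by
    refine Integrable.mono' (integrable_const C) (hF_meas.comp hXt).aestronglyMeasurable
      (Filter.Eventually.of_forall fun ω => ?_)
    rw [Real.norm_eq_abs]; exact hC _
  have hKXQ_int : ∀ A : Set Ω, MeasurableSet[ℱ s] A → Q A < ⊤ →
      IntegrableOn (fun ω => K (X s ω)) A Q := by
    intro A hA _
    refine Integrable.mono' (integrable_const C)
      ((hK_meas.comp hXs).aestronglyMeasurable.restrict) (ae_restrict_of_ae ?_)
    filter_upwards [hgs_int_aeQ] with ω hω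
    rw [Real.norm_eq_abs]; exact hK_bound _ hω
  have hKZ_int : Integrable (fun ω => K (X s ω) * (gt (X t ω) / D)) P := by
    refine Integrable.mono' (hZint.const_mul C)
      ((hK_meas.comp hXs).mul hZmeas).aestronglyMeasurable ?_
    filter_upwards [hgs_int_ae] with ω hω
    rw [Real.norm_eq_abs, abs_mul, abs_of_nonneg (hZnn ω)]
    exact mul_le_mul_of_nonneg_right (hK_bound _ hω) (hZnn ω)
  have hcondKZ : P[fun ω => K (X s ω) * (gt (X t ω) / D) | ℱ s]
      =ᵐ[P] fun ω => (∫ z, F z * gt z * p (t - s) (X s ω) z ∂Vol) / D := by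
    have h1 := condExp_mul_of_stronglyMeasurable_left (m := ℱ s) (μ := P)
      (f := fun ω => K (X s ω)) (g := fun ω => gt (X t ω) / D)
      ((hK_meas.comp hXsF).stronglyMeasurable)
      (by exact hKZ_int) hZint
    refine Filter.EventuallyEq.trans (by exact h1) ?_
    have h2 : (fun ω => K (X s ω)) * P[fun ω => gt (X t ω) / D | ℱ s]
        =ᵐ[P] fun ω => K (X s ω) * (gs (X s ω) / D) :=
      hcondZ.mono fun ω hω => by simp only [Pi.mul_apply, hω]
    refine h2.trans ?_
    filter_upwards [hgs_int_ae] with ω hω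
    have hgs0 : gs (X s ω) ≠ 0 := (hgs_pos _ hω).ne'
    have hD0 : D ≠ 0 := hD_pos.ne'
    have hre : ∫ x, F x * p (t - s) (X s ω) x * gt x ∂Vol
        = ∫ z, F z * gt z * p (t - s) (X s ω) z ∂Vol :=
      integral_congr_ae (Filter.Eventually.of_forall fun x => by ring)
    simp only [hK_eq _ hω, hre]
    field_simp
  have hKeq : ∀ A : Set Ω, MeasurableSet[ℱ s] A → Q A < ⊤ →
      ∫ ω in A, K (X s ω) ∂Q = ∫ ω in A, F (X t ω) ∂Q := by
    intro A hA _
    have mA : MeasurableSet A := ℱ.le s _ hA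
    have hcoe : (fun ω => ENNReal.ofReal ((∫ u, f u * p (T - t) (X t ω) u ∂ν) / D))
        = fun ω => (((fun ω => (gt (X t ω) / D).toNNReal) ω : ℝ≥0) : ℝ≥0∞) := rfl
    have hconv : ∀ φ : Ω → ℝ, ∫ ω in A, φ ω ∂Q
        = ∫ ω in A, φ ω * (gt (X t ω) / D) ∂P := by
      intro φ
      rw [hQ, restrict_withDensity mA, hcoe,
        integral_withDensity_eq_integral_smul (hZmeas.real_toNNReal) φ]
      refine integral_congr_ae (Filter.Eventually.of_forall fun ω => ?_)
      simp only [NNReal.smul_def, smul_eq_mul]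
      rw [Real.coe_toNNReal _ (hZnn ω), mul_comm]
    calc ∫ ω in A, K (X s ω) ∂Q
        = ∫ ω in A, K (X s ω) * (gt (X t ω) / D) ∂P := hconv _
      _ = ∫ ω in A, (P[fun ω => K (X s ω) * (gt (X t ω) / D) | ℱ s]) ω ∂P :=
          (setIntegral_condExp (ℱ.le s) hKZ_int hA).symm
      _ = ∫ ω in A, (∫ z, F z * gt z * p (t - s) (X s ω) z ∂Vol) / D ∂P :=
          integral_congr_ae (ae_restrict_of_ae hcondKZ)
      _ = ∫ ω in A, F (X t ω) * (gt (X t ω) / D) ∂P := (hsetF A hA).symm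
      _ = ∫ ω in A, F (X t ω) ∂Q := (hconv _).symm
  have hKsm : AEStronglyMeasurable[ℱ s] (fun ω => K (X s ω)) Q :=
    StronglyMeasurable.aestronglyMeasurable ((hK_meas.comp hXsF).stronglyMeasurable)
  have hfinal := ae_eq_condExp_of_forall_setIntegral_eq (μ := Q) (ℱ.le s)
    hFQ_int hKXQ_int hKeq hKsm
  refine Filter.EventuallyEq.trans hfinal.symm (Filter.EventuallyEq.of_eq ?_)
  funext ω
  simp only [hK_def, hgs_def]
end

section
/- Fix v ∈ G and t ∈ (0,T) with 0 < p_T(x₀, v) < ∞. Let ℚ be the measure on (Ω, F) with density ω ↦ p_{T−t}(X_t(ω), v) / p_T(x₀, v) with respect to ℙ. Then ℚ is a probability measure, and the law of X_t under ℚ has density y ↦ p_t(x₀, y) · p_{T−t}(y, v) / p_T(x₀, v) with respect to Vol; that is, Measure.map X_t ℚ = Vol.withDensity (fun y => p_t(x₀, y) p_{T−t}(y, v) / p_T(x₀, v)). -/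
open MeasureTheory

/-- Fix `v ∈ G` and `t ∈ (0,T)` with `0 < p_T(x₀,v) < ∞`.  If `ℚ` has density
`ω ↦ p_{T-t}(X_t(ω), v)/p_T(x₀, v)` with respect to `ℙ`, then `ℚ` is a probability
measure and the law of `X_t` under `ℚ` has density
`y ↦ p_t(x₀,y) p_{T-t}(y,v)/p_T(x₀,v)` with respect to `Vol`. -/
theorem bridge_marginal_law
    {G : Type*} [MeasurableSpace G] (Vol : Measure G) [SigmaFinite Vol]
    {Ω : Type*} {mΩ : MeasurableSpace Ω} (P : Measure Ω) [IsProbabilityMeasure P]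
    (ℱ : Filtration ℝ mΩ)
    (p : ℝ → G → G → ℝ)
    (hp_meas : Measurable fun q : ℝ × G × G => p q.1 q.2.1 q.2.2)
    (hp_nonneg : ∀ t x y, 0 < t → 0 ≤ p t x y)
    (hp_symm : ∀ t x y, 0 < t → p t x y = p t y x)
    (hp_ck : ∀ s t : ℝ, 0 < s → 0 < t → ∀ x y,
      p (t + s) x y = ∫ z, p t x z * p s z y ∂Vol)
    (hp_norm : ∀ t x, 0 < t → ∫ y, p t x y ∂Vol = 1)
    (X : ℝ → Ω → G)
    (hX_adapted : ∀ t : ℝ, 0 ≤ t → Measurable[ℱ t] (X t))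
    (x₀ : G) (hX0 : ∀ᵐ ω ∂P, X 0 ω = x₀)
    (hMarkov : ∀ s t : ℝ, 0 ≤ s → s < t → ∀ f : G → ℝ, Measurable f →
      (∃ C, ∀ y, |f y| ≤ C) →
      P[(fun ω => f (X t ω)) | ℱ s] =ᵐ[P] fun ω => ∫ z, f z * p (t - s) (X s ω) z ∂Vol)
    (T : ℝ) (hT : 0 < T)
    (v : G) (t : ℝ) (ht0 : 0 < t) (htT : t < T)
    (hpv_pos : 0 < p T x₀ v)
    (Q : Measure Ω)
    (hQ : Q = P.withDensity fun ω => ENNReal.ofReal (p (T - t) (X t ω) v / p T x₀ v)) :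
    IsProbabilityMeasure Q ∧
    Measure.map (X t) Q
      = Vol.withDensity fun y => ENNReal.ofReal (p t x₀ y * p (T - t) y v / p T x₀ v) := by
  have hTt : 0 < T - t := sub_pos.2 htT
  have hXt : Measurable (X t) := (hX_adapted t ht0.le).mono (ℱ.le t) le_rfl
  -- measurability of slices of p
  have hmeas_slice : ∀ s : ℝ, ∀ x : G, Measurable (fun z => p s x z) := by
    intro s x
    exact hp_meas.comp (measurable_const.prodMk (measurable_const.prodMk measurable_id))
  have hmeas_slice2 : ∀ s : ℝ, ∀ x : G, Measurable (fun z => p s z x) := by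
    intro s x
    exact hp_meas.comp (measurable_const.prodMk (measurable_id.prodMk measurable_const))
  -- integrability of p t x₀ ·
  have hint_pt : Integrable (fun z => p t x₀ z) Vol := by
    by_contra h
    have := hp_norm t x₀ ht0
    rw [integral_undef h] at this
    norm_num at this
  -- key identity: law of X t under P
  have key : ∀ f : G → ℝ, Measurable f → (∃ C, ∀ y, |f y| ≤ C) →
      ∫ ω, f (X t ω) ∂P = ∫ z, f z * p t x₀ z ∂Vol := by
    intro f hf hfb
    have hMk := hMarkov 0 t le_rfl ht0 f hf hfb
    calc ∫ ω, f (X t ω) ∂P = ∫ ω, (P[(fun ω => f (X t ω)) | ℱ 0]) ω ∂P :=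
          (integral_condExp (ℱ.le 0)).symm
      _ = ∫ ω, (∫ z, f z * p (t - 0) (X 0 ω) z ∂Vol) ∂P := integral_congr_ae hMk
      _ = ∫ ω, (∫ z, f z * p t x₀ z ∂Vol) ∂P := by
          refine integral_congr_ae (hX0.mono fun ω h => ?_)
          dsimp only
          rw [h, sub_zero]
      _ = ∫ z, f z * p t x₀ z ∂Vol := by simp
  have hmapP : Measure.map (X t) P = Vol.withDensity (fun z => ENNReal.ofReal (p t x₀ z)) := by
    ext A hA
    rw [Measure.map_apply hXt hA, withDensity_apply _ hA]
    have hbd : ∃ C, ∀ y, |(A.indicator (1 : G → ℝ)) y| ≤ C := by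
      refine ⟨1, fun y => ?_⟩
      by_cases h : y ∈ A <;> simp [Set.indicator, h]
    have h1 := key (A.indicator 1) (measurable_one.indicator hA) hbd
    have hL : ∫ ω, (A.indicator (1 : G → ℝ)) (X t ω) ∂P = (P (X t ⁻¹' A)).toReal := by
      have : ∀ ω, (A.indicator (1 : G → ℝ)) (X t ω)
          = (X t ⁻¹' A).indicator (1 : Ω → ℝ) ω := by
        intro ω
        by_cases h : X t ω ∈ A <;> simp [Set.indicator, h]
      rw [integral_congr_ae (Filter.Eventually.of_forall this),
        integral_indicator_one (hXt hA)]
      rfl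
    have hR : ∫ z, (A.indicator (1 : G → ℝ)) z * p t x₀ z ∂Vol
        = ∫ z in A, p t x₀ z ∂Vol := by
      rw [← integral_indicator hA]
      congr 1
      funext z
      by_cases h : z ∈ A <;> simp [Set.indicator, h]
    rw [hL, hR] at h1
    have hRe : ∫⁻ z in A, ENNReal.ofReal (p t x₀ z) ∂Vol
        = ENNReal.ofReal (∫ z in A, p t x₀ z ∂Vol) := by
      rw [ofReal_integral_eq_lintegral_ofReal (hint_pt.restrict)
        (Filter.Eventually.of_forall fun z => hp_nonneg t x₀ z ht0)]
    rw [hRe, ← h1, ENNReal.ofReal_toReal (measure_ne_top P _)]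
  -- map of Q
  have hmeas_h : Measurable (fun z => ENNReal.ofReal (p (T - t) z v / p T x₀ v)) :=
    (((hmeas_slice2 (T - t) v)).div_const _).ennreal_ofReal
  have hmapQ : Measure.map (X t) Q
      = (Measure.map (X t) P).withDensity (fun z => ENNReal.ofReal (p (T - t) z v / p T x₀ v)) := by
    ext A hA
    rw [Measure.map_apply hXt hA, hQ, withDensity_apply _ (hXt hA),
      withDensity_apply _ hA, setLIntegral_map hA hmeas_h hXt]
  have hmapQ' : Measure.map (X t) Q
      = Vol.withDensity (fun y => ENNReal.ofReal (p t x₀ y * p (T - t) y v / p T x₀ v)) := by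
    rw [hmapQ, hmapP, ← withDensity_mul Vol ((hmeas_slice t x₀).ennreal_ofReal) hmeas_h]
    congr 1
    funext z
    simp only [Pi.mul_apply]
    rw [← ENNReal.ofReal_mul (hp_nonneg t x₀ z ht0), mul_div_assoc]
  refine ⟨?_, hmapQ'⟩
  -- total mass
  have hck : p T x₀ v = ∫ z, p t x₀ z * p (T - t) z v ∂Vol := by
    have := hp_ck (T - t) t hTt ht0 x₀ v
    rwa [add_sub_cancel] at this
  have hint2 : Integrable (fun z => p t x₀ z * p (T - t) z v) Vol := by
    by_contra h
    rw [integral_undef h] at hck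
    exact hpv_pos.ne' hck
  constructor
  have hQuniv : Q Set.univ = (Measure.map (X t) Q) Set.univ := by
    rw [Measure.map_apply hXt MeasurableSet.univ, Set.preimage_univ]
  rw [hQuniv, hmapQ', withDensity_apply _ MeasurableSet.univ, Measure.restrict_univ,
    ← ofReal_integral_eq_lintegral_ofReal]
  · have : ∫ z, p t x₀ z * p (T - t) z v / p T x₀ v ∂Vol = 1 := by
      rw [integral_div, ← hck, div_self hpv_pos.ne']
    rw [this, ENNReal.ofReal_one]
  · exact hint2.div_const _
  · exact Filter.Eventually.of_forall fun z =>
      div_nonneg (mul_nonneg (hp_nonneg t x₀ z ht0) (hp_nonneg (T - t) z v hTt)) hpv_pos.le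
end

section
/- Fix 0 ≤ s < T. Suppose the law of X_T under ℙ has density f : G → [0,∞) with respect to Vol, i.e. Measure.map X_T ℙ = Vol.withDensity f. Let ξ : Ω → [0,∞) be a bounded F_s-measurable random variable, and let φ : G → ℝ be any measurable function such that φ ∘ X_T is a version of the conditional expectation E[ξ | σ(X_T)]. Then for Vol-almost every v ∈ G, φ(v) · f(v) = E[ξ · p_{T−s}(X_s, v)]. In particular, on the set where f(v) > 0, the conditional expectation of ξ given X_T = v equals E[ξ · p_{T−s}(X_s, v)] / f(v) for Vol-almost every v. -/
/-!
Test the claimed identity against a measurable set `A ⊆ G`. Since `X_T` has law `f · Vol` and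
`φ ∘ X_T = E[ξ | X_T]`, the integral `∫_A φ f dVol` is `E[ξ; X_T ∈ A]`. Conditioning on `ℱ_s`,
pulling out the `ℱ_s`-measurable factor `ξ` and applying the Markov property to `1_A` turns this
into `E[ξ ∫_A p_{T-s}(X_s, v) dVol(v)]`, which by Fubini is `∫_A E[ξ p_{T-s}(X_s, v)] dVol(v)`.
Two integrable functions with the same integral over every measurable set agree `Vol`-a.e.
since `Vol` is σ-finite.
-/

open MeasureTheory

section

variable {Ω G : Type*} {m mΩ : MeasurableSpace Ω} [MeasurableSpace G] {μ : Measure Ω}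
  {ν : Measure G}

section Density

variable {X : Ω → G} {f φ : G → ℝ}

theorem setIntegral_mul_density_eq_setIntegral_comp (hX : AEMeasurable X μ) (hf : Measurable f)
    (hf_nonneg : ∀ v, 0 ≤ f v) (hlaw : μ.map X = ν.withDensity fun v => ENNReal.ofReal (f v))
    (hφ : Measurable φ) {A : Set G} (hA : MeasurableSet A) :
    ∫ v in A, φ v * f v ∂ν = ∫ ω in X ⁻¹' A, φ (X ω) ∂μ := by
  rw [← setIntegral_map hA hφ.aestronglyMeasurable hX, hlaw, restrict_withDensity hA,
    integral_withDensity_eq_integral_toReal_smul hf.ennreal_ofReal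
      (ae_of_all _ fun _ => ENNReal.ofReal_lt_top)]
  refine integral_congr_ae (ae_of_all _ fun v => ?_)
  simp [ENNReal.toReal_ofReal (hf_nonneg v), mul_comm]

theorem integrable_mul_density_of_integrable_comp (hX : AEMeasurable X μ) (hf : Measurable f)
    (hf_nonneg : ∀ v, 0 ≤ f v) (hlaw : μ.map X = ν.withDensity fun v => ENNReal.ofReal (f v))
    (hφ : Measurable φ) (h : Integrable (fun ω => φ (X ω)) μ) :
    Integrable (fun v => φ v * f v) ν := by
  have h_law : Integrable φ (μ.map X) := (integrable_map_measure hφ.aestronglyMeasurable hX).2 h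
  rw [hlaw, integrable_withDensity_iff hf.ennreal_ofReal
    (ae_of_all _ fun _ => ENNReal.ofReal_lt_top)] at h_law
  exact h_law.congr (ae_of_all _ fun v => by simp [ENNReal.toReal_ofReal (hf_nonneg v)])

end Density

theorem integrable_prod_mul_of_integral_eq_one [SFinite ν] {ξ : Ω → ℝ} {κ : Ω → G → ℝ}
    (hξ : Integrable ξ μ) (hκ : Measurable (Function.uncurry κ))
    (hκ_nonneg : ∀ ω v, 0 ≤ κ ω v) (hκ_one : ∀ ω, ∫ v, κ ω v ∂ν = 1) :
    Integrable (fun q : Ω × G => ξ q.1 * κ q.1 q.2) (μ.prod ν) := by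
  have hκ_int (ω : Ω) : Integrable (κ ω) ν := .of_integral_ne_zero (by simp [hκ_one])
  have hF_meas : AEStronglyMeasurable (fun q : Ω × G => ξ q.1 * κ q.1 q.2) (μ.prod ν) :=
    hξ.aestronglyMeasurable.comp_fst.mul hκ.aestronglyMeasurable
  refine (integrable_prod_iff hF_meas).2 ⟨ae_of_all _ fun ω => (hκ_int ω).const_mul (ξ ω),
    hξ.norm.congr (ae_of_all _ fun ω => ?_)⟩
  simp only [norm_mul, Real.norm_of_nonneg (hκ_nonneg ω _)]
  rw [integral_const_mul, hκ_one, mul_one]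

theorem integral_mul_condExp_of_stronglyMeasurable [IsFiniteMeasure μ] (hm : m ≤ mΩ)
    {ξ η : Ω → ℝ} (hξ : StronglyMeasurable[m] ξ) (hξη : Integrable (ξ * η) μ)
    (hη : Integrable η μ) :
    ∫ ω, ξ ω * μ[η | m] ω ∂μ = ∫ ω, ξ ω * η ω ∂μ := by
  calc ∫ ω, ξ ω * μ[η | m] ω ∂μ = ∫ ω, μ[ξ * η | m] ω ∂μ :=
        integral_congr_ae (condExp_mul_of_stronglyMeasurable_left hξ hξη hη).symm
    _ = ∫ ω, ξ ω * η ω ∂μ := integral_condExp hm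

theorem setIntegral_preimage_eq_setIntegral_integral_of_condExp_indicator [IsFiniteMeasure μ]
    [SFinite ν] (hm : m ≤ mΩ) {Y : Ω → G} (hY : Measurable Y) {κ : Ω → G → ℝ} {ξ : Ω → ℝ}
    (hξm : StronglyMeasurable[m] ξ) (hξ : Integrable ξ μ)
    (hF : Integrable (fun q : Ω × G => ξ q.1 * κ q.1 q.2) (μ.prod ν))
    {A : Set G} (hA : MeasurableSet A)
    (hcond : μ[fun ω => A.indicator 1 (Y ω) | m] =ᵐ[μ] fun ω => ∫ z, A.indicator 1 z * κ ω z ∂ν) :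
    ∫ ω in Y ⁻¹' A, ξ ω ∂μ = ∫ v in A, ∫ ω, ξ ω * κ ω v ∂μ ∂ν := by
  have h_ind : (fun ω => A.indicator 1 (Y ω)) = (Y ⁻¹' A).indicator (1 : Ω → ℝ) := by
    ext ω; by_cases h : Y ω ∈ A <;> simp [h]
  have hξ_ind : (ξ * fun ω => A.indicator 1 (Y ω)) = (Y ⁻¹' A).indicator ξ := by
    ext ω; by_cases h : Y ω ∈ A <;> simp [h]
  calc ∫ ω in Y ⁻¹' A, ξ ω ∂μ = ∫ ω, ξ ω * A.indicator 1 (Y ω) ∂μ := by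
        rw [← integral_indicator (hY hA), ← hξ_ind]; rfl
    _ = ∫ ω, ξ ω * μ[fun ω => A.indicator 1 (Y ω) | m] ω ∂μ := by
        refine (integral_mul_condExp_of_stronglyMeasurable hm hξm ?_ ?_).symm
        · exact hξ_ind ▸ hξ.indicator (hY hA)
        · exact h_ind ▸ (integrable_const 1).indicator (hY hA)
    _ = ∫ ω, ξ ω * ∫ z, A.indicator 1 z * κ ω z ∂ν ∂μ :=
        integral_congr_ae (hcond.mono fun ω h => congrArg (ξ ω * ·) h)
    _ = ∫ ω, ∫ v in A, ξ ω * κ ω v ∂ν ∂μ := by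
        congr 1 with ω
        rw [← integral_const_mul, ← integral_indicator hA]
        congr 1 with z
        by_cases hz : z ∈ A <;> simp [hz]
    _ = ∫ v in A, ∫ ω, ξ ω * κ ω v ∂μ ∂ν :=
        integral_integral_swap
          (hF.mono_measure (Measure.prod_mono le_rfl Measure.restrict_le_self))

end

theorem conditional_expectation_given_endpoint_general
    {G : Type*} [MeasurableSpace G] (Vol : Measure G) [SigmaFinite Vol]
    {Ω : Type*} {mΩ : MeasurableSpace Ω} (P : Measure Ω) [IsProbabilityMeasure P]
    (ℱ : Filtration ℝ mΩ)
    (p : ℝ → G → G → ℝ)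
    (hp_meas : Measurable fun q : ℝ × G × G => p q.1 q.2.1 q.2.2)
    (hp_nonneg : ∀ t x y, 0 < t → 0 ≤ p t x y)
    (hp_norm : ∀ t x, 0 < t → ∫ y, p t x y ∂Vol = 1)
    (X : ℝ → Ω → G)
    (hX_adapted : ∀ t : ℝ, 0 ≤ t → Measurable[ℱ t] (X t))
    (hMarkov : ∀ s t : ℝ, 0 ≤ s → s < t → ∀ f : G → ℝ, Measurable f →
      (∃ C, ∀ y, |f y| ≤ C) →
      P[(fun ω => f (X t ω)) | ℱ s] =ᵐ[P] fun ω => ∫ z, f z * p (t - s) (X s ω) z ∂Vol)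
    (T : ℝ)
    (s : ℝ) (hs : 0 ≤ s) (hsT : s < T)
    -- the law of `X_T` has density `f : G → [0, ∞)` with respect to `Vol` :
    (f : G → ℝ) (hf_meas : Measurable f) (hf_nonneg : ∀ v, 0 ≤ f v)
    (hf_law : Measure.map (X T) P = Vol.withDensity fun v => ENNReal.ofReal (f v))
    -- a bounded nonnegative `ℱ_s`-measurable random variable :
    (ξ : Ω → ℝ) (hξ_meas : Measurable[ℱ s] ξ)
    (hξ_bdd : ∃ C, ∀ ω, |ξ ω| ≤ C)
    -- `φ ∘ X_T` is a version of the conditional expectation `E[ξ | σ(X_T)]` :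
    (φ : G → ℝ) (hφ_meas : Measurable φ)
    (hφ : P[ξ | MeasurableSpace.comap (X T) inferInstance]
      =ᵐ[P] fun ω => φ (X T ω)) :
    (∀ᵐ v ∂Vol, φ v * f v = ∫ ω, ξ ω * p (T - s) (X s ω) v ∂P) ∧
    (∀ᵐ v ∂Vol, 0 < f v → φ v = (∫ ω, ξ ω * p (T - s) (X s ω) v ∂P) / f v) := by
  obtain ⟨C, hC⟩ := hξ_bdd
  have hXs : Measurable (X s) := (hX_adapted s hs).mono (ℱ.le s) le_rfl
  have hXT : Measurable (X T) := (hX_adapted T (hs.trans hsT.le)).mono (ℱ.le T) le_rfl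
  have hξ_int : Integrable ξ P :=
    .of_bound (hξ_meas.mono (ℱ.le s) le_rfl).aestronglyMeasurable C (ae_of_all _ hC)
  have hF : Integrable (fun q : Ω × G => ξ q.1 * p (T - s) (X s q.1) q.2) (P.prod Vol) :=
    integrable_prod_mul_of_integral_eq_one (κ := fun ω v => p (T - s) (X s ω) v) hξ_int
      (hp_meas.comp (measurable_const.prodMk ((hXs.comp measurable_fst).prodMk measurable_snd)))
      (fun _ _ => hp_nonneg _ _ _ (sub_pos.2 hsT)) (fun _ => hp_norm _ _ (sub_pos.2 hsT))
  have hφf : Integrable (fun v => φ v * f v) Vol :=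
    integrable_mul_density_of_integrable_comp hXT.aemeasurable hf_meas hf_nonneg hf_law hφ_meas
      (integrable_condExp.congr hφ)
  have hdensity : (fun v => φ v * f v) =ᵐ[Vol] fun v => ∫ ω, ξ ω * p (T - s) (X s ω) v ∂P := by
    refine ae_eq_of_forall_setIntegral_eq_of_sigmaFinite (fun _ _ _ => hφf.integrableOn)
      (fun _ _ _ => hF.integral_prod_right.integrableOn) fun A hA _ => ?_
    have h_ind_bdd : ∀ y, |A.indicator (1 : G → ℝ) y| ≤ 1 := fun y => by
      by_cases hy : y ∈ A <;> simp [hy]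
    calc ∫ v in A, φ v * f v ∂Vol = ∫ ω in X T ⁻¹' A, φ (X T ω) ∂P :=
          setIntegral_mul_density_eq_setIntegral_comp hXT.aemeasurable hf_meas hf_nonneg hf_law
            hφ_meas hA
      _ = ∫ ω in X T ⁻¹' A, P[ξ | MeasurableSpace.comap (X T) inferInstance] ω ∂P :=
          setIntegral_congr_ae (hXT hA) (hφ.mono fun _ h _ => h.symm)
      _ = ∫ ω in X T ⁻¹' A, ξ ω ∂P := setIntegral_condExp hXT.comap_le hξ_int ⟨A, hA, rfl⟩
      _ = _ := setIntegral_preimage_eq_setIntegral_integral_of_condExp_indicator (ℱ.le s) hXT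
          hξ_meas.stronglyMeasurable hξ_int hF hA
          (hMarkov s T hs hsT _ (measurable_const.indicator hA) ⟨1, h_ind_bdd⟩)
  refine ⟨hdensity, ?_⟩
  filter_upwards [hdensity] with v hv hfv
  rw [eq_div_iff hfv.ne', hv]

/-- Fix `0 ≤ s < T`.  Suppose the law of `X_T` under `ℙ` has density `f ≥ 0` with
respect to `Vol`, `ξ : Ω → [0,∞)` is a bounded `ℱ_s`-measurable random variable, and
`φ ∘ X_T` is a version of the conditional expectation `E[ξ | σ(X_T)]`.  Then for
`Vol`-a.e. `v`, `φ(v) · f(v) = E[ξ · p_{T-s}(X_s, v)]`; in particular, where `f(v) > 0`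
the conditional expectation of `ξ` given `X_T = v` equals
`E[ξ · p_{T-s}(X_s, v)] / f(v)` for `Vol`-a.e. `v`. -/
theorem conditional_expectation_given_endpoint
    {G : Type*} [MeasurableSpace G] (Vol : Measure G) [SigmaFinite Vol]
    {Ω : Type*} {mΩ : MeasurableSpace Ω} (P : Measure Ω) [IsProbabilityMeasure P]
    (ℱ : Filtration ℝ mΩ)
    (p : ℝ → G → G → ℝ)
    (hp_meas : Measurable fun q : ℝ × G × G => p q.1 q.2.1 q.2.2)
    (hp_nonneg : ∀ t x y, 0 < t → 0 ≤ p t x y)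
    (hp_symm : ∀ t x y, 0 < t → p t x y = p t y x)
    (hp_ck : ∀ s t : ℝ, 0 < s → 0 < t → ∀ x y,
      p (t + s) x y = ∫ z, p t x z * p s z y ∂Vol)
    (hp_norm : ∀ t x, 0 < t → ∫ y, p t x y ∂Vol = 1)
    (X : ℝ → Ω → G)
    (hX_adapted : ∀ t : ℝ, 0 ≤ t → Measurable[ℱ t] (X t))
    (x₀ : G) (hX0 : ∀ᵐ ω ∂P, X 0 ω = x₀)
    (hMarkov : ∀ s t : ℝ, 0 ≤ s → s < t → ∀ f : G → ℝ, Measurable f →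
      (∃ C, ∀ y, |f y| ≤ C) →
      P[(fun ω => f (X t ω)) | ℱ s] =ᵐ[P] fun ω => ∫ z, f z * p (t - s) (X s ω) z ∂Vol)
    (T : ℝ) (hT : 0 < T)
    (s : ℝ) (hs : 0 ≤ s) (hsT : s < T)
    -- the law of `X_T` has density `f : G → [0, ∞)` with respect to `Vol` :
    (f : G → ℝ) (hf_meas : Measurable f) (hf_nonneg : ∀ v, 0 ≤ f v)
    (hf_law : Measure.map (X T) P = Vol.withDensity fun v => ENNReal.ofReal (f v))
    -- a bounded nonnegative `ℱ_s`-measurable random variable :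
    (ξ : Ω → ℝ) (hξ_meas : Measurable[ℱ s] ξ) (hξ_nonneg : ∀ ω, 0 ≤ ξ ω)
    (hξ_bdd : ∃ C, ∀ ω, |ξ ω| ≤ C)
    -- `φ ∘ X_T` is a version of the conditional expectation `E[ξ | σ(X_T)]` :
    (φ : G → ℝ) (hφ_meas : Measurable φ)
    (hφ : P[ξ | MeasurableSpace.comap (X T) inferInstance]
      =ᵐ[P] fun ω => φ (X T ω)) :
    (∀ᵐ v ∂Vol, φ v * f v = ∫ ω, ξ ω * p (T - s) (X s ω) v ∂P) ∧
    (∀ᵐ v ∂Vol, 0 < f v → φ v = (∫ ω, ξ ω * p (T - s) (X s ω) v ∂P) / f v) :=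
  conditional_expectation_given_endpoint_general Vol P ℱ p hp_meas hp_nonneg hp_norm X hX_adapted
    hMarkov T s hs hsT f hf_meas hf_nonneg hf_law ξ hξ_meas hξ_bdd φ hφ_meas hφ
end

section
/- (Rodrigues' formula.) If θ := ‖a‖₂ ≠ 0, then the matrix exponential of A(a) is given by exp(A(a)) = I + (sin θ / θ) · A(a) + ((1 − cos θ)/θ²) · A(a)², where I is the 3×3 identity matrix. -/
/-- The cross-product (skew-symmetric) matrix of a vector `a ∈ ℝ³`. -/
def crossMatrix (a : EuclideanSpace ℝ (Fin 3)) : Matrix (Fin 3) (Fin 3) ℝ :=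
  !![0, -a 2, a 1; a 2, 0, -a 0; -a 1, a 0, 0]

/-!
The cross-product matrix satisfies `A³ = -θ² A`. Hence every odd power of `A` is a multiple of
`A` and every even power beyond the zeroth a multiple of `A²`, with coefficients `(-θ²)ᵏ`.
Splitting the exponential series into even and odd terms, the scalar series that appear are the
sine series divided by `θ` and the tail of the cosine series divided by `-θ²`.
-/

open Nat NormedSpace

section PowThree

variable {R 𝔸 : Type*} [CommSemiring R] [Semiring 𝔸] [Algebra R 𝔸] {A : 𝔸} {c : R}

theorem pow_two_mul_add_one_of_pow_three_eq_smul (hA : A ^ 3 = c • A) (k : ℕ) :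
    A ^ (2 * k + 1) = c ^ k • A := by
  induction k with
  | zero => simp
  | succ k ih =>
    rw [show 2 * (k + 1) + 1 = 2 * k + 1 + 2 by ring, pow_add, ih, smul_mul_assoc,
      ← pow_succ' A 2, hA, smul_smul, pow_succ]

theorem pow_two_mul_add_two_of_pow_three_eq_smul (hA : A ^ 3 = c • A) (k : ℕ) :
    A ^ (2 * k + 2) = c ^ k • A ^ 2 := by
  rw [pow_succ, pow_two_mul_add_one_of_pow_three_eq_smul hA, smul_mul_assoc, ← sq]

end PowThree

namespace Real

variable {θ : ℝ}

theorem hasSum_sin_div (hθ : θ ≠ 0) :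
    HasSum (fun k : ℕ => (-θ ^ 2) ^ k / (2 * k + 1)!) (sin θ / θ) := by
  have hterm (k : ℕ) :
      (-θ ^ 2) ^ k / (2 * k + 1)! = (-1) ^ k * θ ^ (2 * k + 1) / (2 * k + 1)! / θ := by
    rw [neg_pow, ← pow_mul, pow_succ]
    field_simp
  simpa only [hterm] using (hasSum_sin θ).div_const θ

theorem hasSum_one_sub_cos_div_sq (hθ : θ ≠ 0) :
    HasSum (fun k : ℕ => (-θ ^ 2) ^ k / (2 * k + 2)!) ((1 - cos θ) / θ ^ 2) := by
  have hterm (k : ℕ) : (-θ ^ 2) ^ k / (2 * k + 2)!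
      = (-1) ^ (k + 1) * θ ^ (2 * (k + 1)) / (2 * (k + 1))! / (-θ ^ 2) := by
    rw [mul_add_one, neg_pow, pow_succ (-1 : ℝ) k, ← pow_mul, pow_add]
    field_simp
  have hvalue : (1 - cos θ) / θ ^ 2
      = (cos θ - ∑ k ∈ Finset.range 1, (-1) ^ k * θ ^ (2 * k) / (2 * k)!) / (-θ ^ 2) := by
    simp only [Finset.sum_range_one]
    field_simp
    ring
  rw [hvalue]
  simpa only [hterm] using ((hasSum_nat_add_iff' 1).mpr (hasSum_cos θ)).div_const (-θ ^ 2)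

end Real

theorem exp_eq_of_pow_three_eq_neg_sq_smul {𝔸 : Type*} [Ring 𝔸] [Algebra ℝ 𝔸]
    [TopologicalSpace 𝔸] [IsTopologicalRing 𝔸] [ContinuousSMul ℝ 𝔸] [T2Space 𝔸]
    {A : 𝔸} {θ : ℝ} (hθ : θ ≠ 0) (hA : A ^ 3 = (-θ ^ 2) • A) :
    exp A = 1 + (Real.sin θ / θ) • A + ((1 - Real.cos θ) / θ ^ 2) • A ^ 2 := by
  have hodd_term (k : ℕ) : ((2 * k + 1)! : ℝ)⁻¹ • A ^ (2 * k + 1)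
      = ((-θ ^ 2) ^ k / (2 * k + 1)!) • A := by
    rw [pow_two_mul_add_one_of_pow_three_eq_smul hA, smul_smul, div_eq_inv_mul]
  have heven_term (k : ℕ) : ((2 * (k + 1))! : ℝ)⁻¹ • A ^ (2 * (k + 1))
      = ((-θ ^ 2) ^ k / (2 * k + 2)!) • A ^ 2 := by
    rw [mul_add_one, pow_two_mul_add_two_of_pow_three_eq_smul hA, smul_smul, div_eq_inv_mul]
  have hodd : HasSum (fun k : ℕ => ((2 * k + 1)! : ℝ)⁻¹ • A ^ (2 * k + 1))
      ((Real.sin θ / θ) • A) := by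
    simpa only [hodd_term] using (Real.hasSum_sin_div hθ).smul_const A
  have heven : HasSum (fun k : ℕ => ((2 * k)! : ℝ)⁻¹ • A ^ (2 * k))
      (1 + ((1 - Real.cos θ) / θ ^ 2) • A ^ 2) := by
    have htail := (Real.hasSum_one_sub_cos_div_sq hθ).smul_const (A ^ 2)
    simp only [← heven_term] at htail
    simpa using HasSum.zero_add (f := fun k : ℕ => ((2 * k)! : ℝ)⁻¹ • A ^ (2 * k)) htail
  rw [exp_eq_tsum ℝ, add_right_comm]
  exact (HasSum.even_add_odd (f := fun n => (n ! : ℝ)⁻¹ • A ^ n) heven hodd).tsum_eq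

theorem crossMatrix_pow_three (a : EuclideanSpace ℝ (Fin 3)) :
    crossMatrix a ^ 3 = (-‖a‖ ^ 2) • crossMatrix a := by
  rw [EuclideanSpace.real_norm_sq_eq, Fin.sum_univ_three]
  ext i j
  fin_cases i <;> fin_cases j <;>
    simp [crossMatrix, pow_succ, Matrix.mul_apply, Fin.sum_univ_three] <;> ring

/-- **Rodrigues' formula.** If `θ = ‖a‖ ≠ 0`, then the matrix exponential of the
cross-product matrix `A(a)` is `I + (sin θ / θ) A(a) + ((1 - cos θ)/θ²) A(a)²`. -/
theorem rodrigues_formula (a : EuclideanSpace ℝ (Fin 3)) (hθ : ‖a‖ ≠ 0) :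
    NormedSpace.exp (crossMatrix a)
      = 1 + (Real.sin ‖a‖ / ‖a‖) • crossMatrix a
          + ((1 - Real.cos ‖a‖) / ‖a‖ ^ 2) • (crossMatrix a ^ 2) :=
  exp_eq_of_pow_three_eq_neg_sq_smul hθ (crossMatrix_pow_three a)
end
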